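/- For every k ≥ 3, the number of Baxter matrices with 3 rows and k columns having exactly k + 2 entries equal to 1 equals 6k² − 13k + 11. -/

import Mathlib

/-- A Baxter matrix: a 0-1 matrix (encoded with `Bool`) such that every row and
every column contains a 1, and every clockwise and counter-clockwise pinwheel
contains an all-zero segment. -/
def IsBaxter (m n : ℕ) (M : Fin m → Fin n → Bool) : Prop :=
  (∀ i : Fin m, ∃ j : Fin n, M i j = true) ∧
  (∀ j : Fin n, ∃ i : Fin m, M i j = true) ∧
  -- clockwise pinwheels
  (∀ i j : ℕ, ∀ hi : i + 1 < m, ∀ hj : j + 1 < n,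
    (∀ j' : Fin n, (j' : ℕ) ≤ j → M ⟨i, Nat.lt_of_succ_lt hi⟩ j' = false) ∨
    (∀ i' : Fin m, (i' : ℕ) ≤ i → M i' ⟨j + 1, hj⟩ = false) ∨
    (∀ j' : Fin n, j + 1 ≤ (j' : ℕ) → M ⟨i + 1, hi⟩ j' = false) ∨
    (∀ i' : Fin m, i + 1 ≤ (i' : ℕ) → M i' ⟨j, Nat.lt_of_succ_lt hj⟩ = false)) ∧
  -- counter-clockwise pinwheels
  (∀ i j : ℕ, ∀ hi : i + 1 < m, ∀ hj : j + 1 < n,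
    (∀ j' : Fin n, (j' : ℕ) ≤ j → M ⟨i + 1, hi⟩ j' = false) ∨
    (∀ i' : Fin m, (i' : ℕ) ≤ i → M i' ⟨j, Nat.lt_of_succ_lt hj⟩ = false) ∨
    (∀ j' : Fin n, j + 1 ≤ (j' : ℕ) → M ⟨i, Nat.lt_of_succ_lt hi⟩ j' = false) ∨
    (∀ i' : Fin m, i + 1 ≤ (i' : ℕ) → M i' ⟨j + 1, hj⟩ = false))

/-- The number of entries equal to 1 in the matrix. -/
def onesCount (m n : ℕ) (M : Fin m → Fin n → Bool) : ℕ :=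
  (Finset.univ.filter (fun p : Fin m × Fin n => M p.1 p.2 = true)).card

namespace BX

def Lz (r : ℕ → Bool) (j : ℕ) : Prop := ∀ t, t ≤ j → r t = false
def Rz (r : ℕ → Bool) (j : ℕ) : Prop := ∀ t, j < t → r t = false

structure Bax3 (n : ℕ) (A B C : ℕ → Bool) : Prop where
  bndA : ∀ t, n ≤ t → A t = false
  bndB : ∀ t, n ≤ t → B t = false
  bndC : ∀ t, n ≤ t → C t = false
  rowA : ∃ j, j < n ∧ A j = true
  rowB : ∃ j, j < n ∧ B j = true
  rowC : ∃ j, j < n ∧ C j = true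
  colne : ∀ j, j < n → (A j = true ∨ B j = true ∨ C j = true)
  cw0 : ∀ j, j + 1 < n → Lz A j ∨ A (j+1) = false ∨ Rz B j ∨ (B j = false ∧ C j = false)
  ccw0 : ∀ j, j + 1 < n → Lz B j ∨ A j = false ∨ Rz A j ∨ (B (j+1) = false ∧ C (j+1) = false)
  cw1 : ∀ j, j + 1 < n → Lz B j ∨ (A (j+1) = false ∧ B (j+1) = false) ∨ Rz C j ∨ C j = false
  ccw1 : ∀ j, j + 1 < n → Lz C j ∨ (A j = false ∧ B j = false) ∨ Rz B j ∨ C (j+1) = false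

variable {n : ℕ}

def rowOf (n : ℕ) (M : Fin 3 → Fin n → Bool) (i : Fin 3) : ℕ → Bool :=
  fun t => if h : t < n then M i ⟨t, h⟩ else false

lemma fin3cases (i : Fin 3) : i = 0 ∨ i = 1 ∨ i = 2 := by omega

lemma rowOf_lt (M : Fin 3 → Fin n → Bool) (i : Fin 3) (t : ℕ) (h : t < n) :
    rowOf n M i t = M i ⟨t, h⟩ := dif_pos h

lemma Lconv {M : Fin 3 → Fin n → Bool} {i : Fin 3} {j : ℕ}
    (h : ∀ j' : Fin n, (j' : ℕ) ≤ j → M i j' = false) : Lz (rowOf n M i) j := by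
  intro t ht
  by_cases htn : t < n
  · rw [rowOf_lt M i t htn]; exact h ⟨t, htn⟩ ht
  · simp [rowOf, htn]

lemma Rconv {M : Fin 3 → Fin n → Bool} {i : Fin 3} {j : ℕ}
    (h : ∀ j' : Fin n, j + 1 ≤ (j' : ℕ) → M i j' = false) : Rz (rowOf n M i) j := by
  intro t ht
  by_cases htn : t < n
  · rw [rowOf_lt M i t htn]; exact h ⟨t, htn⟩ ht
  · simp [rowOf, htn]

lemma Lconv' {M : Fin 3 → Fin n → Bool} {i : Fin 3} {j : ℕ}
    (h : Lz (rowOf n M i) j) : ∀ j' : Fin n, (j' : ℕ) ≤ j → M i j' = false := by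
  intro t ht
  have := h t ht
  rwa [rowOf_lt M i t t.isLt, Fin.eta] at this

lemma Rconv' {M : Fin 3 → Fin n → Bool} {i : Fin 3} {j : ℕ}
    (h : Rz (rowOf n M i) j) : ∀ j' : Fin n, j + 1 ≤ (j' : ℕ) → M i j' = false := by
  intro t ht
  have := h t ht
  rwa [rowOf_lt M i t t.isLt, Fin.eta] at this

lemma fin3le0 {P : Fin 3 → Prop} : (∀ i' : Fin 3, (i' : ℕ) ≤ 0 → P i') ↔ P 0 := by
  constructor
  · intro h; exact h 0 (by simp)
  · intro h i' hi'
    have : i' = 0 := by omega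
    rwa [this]

lemma fin3le1 {P : Fin 3 → Prop} : (∀ i' : Fin 3, (i' : ℕ) ≤ 1 → P i') ↔ P 0 ∧ P 1 := by
  constructor
  · intro h; exact ⟨h 0 (by simp), h 1 (by simp)⟩
  · rintro ⟨h0, h1⟩ i' hi'
    have : i' = 0 ∨ i' = 1 := by omega
    rcases this with h | h <;> rw [h] <;> assumption

lemma fin3ge1 {P : Fin 3 → Prop} : (∀ i' : Fin 3, 1 ≤ (i' : ℕ) → P i') ↔ P 1 ∧ P 2 := by
  constructor
  · intro h; exact ⟨h 1 (by simp), h 2 (by norm_num)⟩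
  · rintro ⟨h1, h2⟩ i' hi'
    have : i' = 1 ∨ i' = 2 := by omega
    rcases this with h | h <;> rw [h] <;> assumption

lemma fin3ge2 {P : Fin 3 → Prop} : (∀ i' : Fin 3, 2 ≤ (i' : ℕ) → P i') ↔ P 2 := by
  constructor
  · intro h; exact h 2 (by norm_num)
  · intro h i' hi'
    have : i' = 2 := by omega
    rwa [this]

theorem isBaxter_iff_bax3 (M : Fin 3 → Fin n → Bool) :
    IsBaxter 3 n M ↔ Bax3 n (rowOf n M 0) (rowOf n M 1) (rowOf n M 2) := by
  constructor
  · rintro ⟨hrow, hcol, hcw, hccw⟩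
    have hb : ∀ i : Fin 3, ∀ t, n ≤ t → rowOf n M i t = false := by
      intro i t ht; simp [rowOf]; omega
    have hr : ∀ i : Fin 3, ∃ j, j < n ∧ rowOf n M i j = true := by
      intro i; obtain ⟨j, hj⟩ := hrow i
      exact ⟨j, j.isLt, by rw [rowOf_lt M i j j.isLt, Fin.eta]; exact hj⟩
    refine ⟨hb 0, hb 1, hb 2, hr 0, hr 1, hr 2, ?_, ?_, ?_, ?_, ?_⟩
    · intro j hj
      obtain ⟨i, hi⟩ := hcol ⟨j, hj⟩
      have e0 : rowOf n M 0 j = M 0 ⟨j, hj⟩ := rowOf_lt M 0 j hj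
      have e1 : rowOf n M 1 j = M 1 ⟨j, hj⟩ := rowOf_lt M 1 j hj
      have e2 : rowOf n M 2 j = M 2 ⟨j, hj⟩ := rowOf_lt M 2 j hj
      rcases fin3cases i with h | h | h <;> subst h
      · exact Or.inl (by rw [e0]; exact hi)
      · exact Or.inr (Or.inl (by rw [e1]; exact hi))
      · exact Or.inr (Or.inr (by rw [e2]; exact hi))
    · intro j hj
      rcases hcw 0 j (by omega) hj with h | h | h | h
      · exact Or.inl (Lconv h)
      · refine Or.inr (Or.inl ?_)
        rw [rowOf_lt M 0 (j+1) hj]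
        exact fin3le0.mp h
      · exact Or.inr (Or.inr (Or.inl (Rconv h)))
      · refine Or.inr (Or.inr (Or.inr ?_))
        have := fin3ge1.mp h
        rw [rowOf_lt M 1 j (by omega), rowOf_lt M 2 j (by omega)]
        exact this
    · intro j hj
      rcases hccw 0 j (by omega) hj with h | h | h | h
      · exact Or.inl (Lconv h)
      · refine Or.inr (Or.inl ?_)
        rw [rowOf_lt M 0 j (by omega)]
        exact fin3le0.mp h
      · exact Or.inr (Or.inr (Or.inl (Rconv h)))
      · refine Or.inr (Or.inr (Or.inr ?_))
        have := fin3ge1.mp h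
        rw [rowOf_lt M 1 (j+1) hj, rowOf_lt M 2 (j+1) hj]
        exact this
    · intro j hj
      rcases hcw 1 j (by omega) hj with h | h | h | h
      · exact Or.inl (Lconv h)
      · refine Or.inr (Or.inl ?_)
        have := fin3le1.mp h
        rw [rowOf_lt M 0 (j+1) hj, rowOf_lt M 1 (j+1) hj]
        exact this
      · exact Or.inr (Or.inr (Or.inl (Rconv h)))
      · refine Or.inr (Or.inr (Or.inr ?_))
        rw [rowOf_lt M 2 j (by omega)]
        exact fin3ge2.mp h
    · intro j hj
      rcases hccw 1 j (by omega) hj with h | h | h | h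
      · exact Or.inl (Lconv h)
      · refine Or.inr (Or.inl ?_)
        have := fin3le1.mp h
        rw [rowOf_lt M 0 j (by omega), rowOf_lt M 1 j (by omega)]
        exact this
      · exact Or.inr (Or.inr (Or.inl (Rconv h)))
      · refine Or.inr (Or.inr (Or.inr ?_))
        rw [rowOf_lt M 2 (j+1) hj]
        exact fin3ge2.mp h
  · intro hb
    obtain ⟨bA, bB, bC, rA, rB, rC, cne, c0, d0, c1, d1⟩ := hb
    refine ⟨?_, ?_, ?_, ?_⟩
    · intro i
      rcases fin3cases i with h | h | h <;> subst h
      · obtain ⟨j, hj, hA⟩ := rA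
        exact ⟨⟨j, hj⟩, by rwa [rowOf_lt M 0 j hj] at hA⟩
      · obtain ⟨j, hj, hA⟩ := rB
        exact ⟨⟨j, hj⟩, by rwa [rowOf_lt M 1 j hj] at hA⟩
      · obtain ⟨j, hj, hA⟩ := rC
        exact ⟨⟨j, hj⟩, by rwa [rowOf_lt M 2 j hj] at hA⟩
    · intro j
      rcases cne j j.isLt with h | h | h
      · exact ⟨0, by rwa [rowOf_lt M 0 j j.isLt, Fin.eta] at h⟩
      · exact ⟨1, by rwa [rowOf_lt M 1 j j.isLt, Fin.eta] at h⟩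
      · exact ⟨2, by rwa [rowOf_lt M 2 j j.isLt, Fin.eta] at h⟩
    · intro i j hi hj
      have hi' : i = 0 ∨ i = 1 := by omega
      rcases hi' with h | h <;> subst h
      · rcases c0 j hj with h | h | h | h
        · exact Or.inl (Lconv' h)
        · refine Or.inr (Or.inl ?_)
          rw [fin3le0]
          rwa [rowOf_lt M 0 (j+1) hj] at h
        · exact Or.inr (Or.inr (Or.inl (Rconv' h)))
        · refine Or.inr (Or.inr (Or.inr ?_))
          rw [fin3ge1]
          rwa [rowOf_lt M 1 j (by omega), rowOf_lt M 2 j (by omega)] at h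
      · rcases c1 j hj with h | h | h | h
        · exact Or.inl (Lconv' h)
        · refine Or.inr (Or.inl ?_)
          rw [fin3le1]
          rwa [rowOf_lt M 0 (j+1) hj, rowOf_lt M 1 (j+1) hj] at h
        · exact Or.inr (Or.inr (Or.inl (Rconv' h)))
        · refine Or.inr (Or.inr (Or.inr ?_))
          rw [fin3ge2]
          rwa [rowOf_lt M 2 j (by omega)] at h
    · intro i j hi hj
      have hi' : i = 0 ∨ i = 1 := by omega
      rcases hi' with h | h <;> subst h
      · rcases d0 j hj with h | h | h | h
        · exact Or.inl (Lconv' h)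
        · refine Or.inr (Or.inl ?_)
          rw [fin3le0]
          rwa [rowOf_lt M 0 j (by omega)] at h
        · exact Or.inr (Or.inr (Or.inl (Rconv' h)))
        · refine Or.inr (Or.inr (Or.inr ?_))
          rw [fin3ge1]
          rwa [rowOf_lt M 1 (j+1) hj, rowOf_lt M 2 (j+1) hj] at h
      · rcases d1 j hj with h | h | h | h
        · exact Or.inl (Lconv' h)
        · refine Or.inr (Or.inl ?_)
          rw [fin3le1]
          rwa [rowOf_lt M 0 j (by omega), rowOf_lt M 1 j (by omega)] at h
        · exact Or.inr (Or.inr (Or.inl (Rconv' h)))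
        · refine Or.inr (Or.inr (Or.inr ?_))
          rw [fin3ge2]
          rwa [rowOf_lt M 2 (j+1) hj] at h

lemma onesCount_eq_sum (M : Fin 3 → Fin n → Bool) :
    onesCount 3 n M = ∑ j ∈ Finset.range n,
      ((rowOf n M 0 j).toNat + (rowOf n M 1 j).toNat + (rowOf n M 2 j).toNat) := by
  classical
  rw [onesCount]
  rw [Finset.card_filter]
  rw [Fintype.sum_prod_type]
  rw [Finset.sum_comm]
  rw [← Fin.sum_univ_eq_sum_range (fun j => ((rowOf n M 0 j).toNat + (rowOf n M 1 j).toNat + (rowOf n M 2 j).toNat))]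
  apply Finset.sum_congr rfl
  intro j _
  rw [Fin.sum_univ_three]
  have : ∀ i : Fin 3, rowOf n M i (j : ℕ) = M i j := by
    intro i; rw [rowOf_lt M i j j.isLt, Fin.eta]
  simp [this]
  rcases fin3cases' : M 0 j <;> rcases M 1 j <;> rcases M 2 j <;> simp_all

variable {n : ℕ} {A B C : ℕ → Bool}

/-- Between two A-ones (positions p₀ < t) with a B-one at u ≥ t, rows B and C vanish on [p₀, t). -/
lemma downA (h : Bax3 n A B C) {p₀ t u : ℕ} (hA0 : A p₀ = true) (hAt : A t = true)
    (hBu : B u = true) (h1 : p₀ < t) (h2 : t ≤ u) (h3 : u < n) :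
    ∀ j, p₀ ≤ j → j < t → B j = false ∧ C j = false := by
  have key : ∀ d j, j + d + 1 = t → p₀ ≤ j → B j = false ∧ C j = false := by
    intro d
    induction d with
    | zero =>
      intro j hjt hpj
      rcases h.cw0 j (by omega) with hc | hc | hc | hc
      · exact absurd (hc p₀ hpj) (by simp [hA0])
      · rw [show j + 1 = t by omega] at hc
        exact absurd hc (by simp [hAt])
      · exact absurd (hc u (by omega)) (by simp [hBu])
      · exact hc
    | succ d ih =>
      intro j hjt hpj
      have hnext : B (j+1) = false ∧ C (j+1) = false := ih (j+1) (by omega) (by omega)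
      have hAnext : A (j+1) = true := by
        rcases h.colne (j+1) (by omega) with hh | hh | hh
        · exact hh
        · rw [hnext.1] at hh; exact absurd hh (by simp)
        · rw [hnext.2] at hh; exact absurd hh (by simp)
      rcases h.cw0 j (by omega) with hc | hc | hc | hc
      · exact absurd (hc p₀ hpj) (by simp [hA0])
      · exact absurd hc (by simp [hAnext])
      · exact absurd (hc u (by omega)) (by simp [hBu])
      · exact hc
  intro j hpj hjt
  exact key (t - j - 1) j (by omega) hpj

/-- Between two A-ones (positions t < v) with a B-one at u ≤ t, rows B and C vanish on (t, v]. -/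
lemma upA (h : Bax3 n A B C) {u t v : ℕ} (hBu : B u = true) (hAt : A t = true)
    (hAv : A v = true) (h1 : u ≤ t) (h2 : t < v) (h3 : v < n) :
    ∀ j, t < j → j ≤ v → B j = false ∧ C j = false := by
  have key : ∀ d j, t + d + 1 = j → j ≤ v → B j = false ∧ C j = false := by
    intro d
    induction d with
    | zero =>
      intro j hjt hjv
      rcases h.ccw0 (j-1) (by omega) with hc | hc | hc | hc
      · exact absurd (hc u (by omega)) (by simp [hBu])
      · rw [show j - 1 = t by omega] at hc
        exact absurd hc (by simp [hAt])
      · exact absurd (hc v (by omega)) (by simp [hAv])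
      · rw [show j - 1 + 1 = j by omega] at hc
        exact hc
    | succ d ih =>
      intro j hjt hjv
      have hprev : B (j-1) = false ∧ C (j-1) = false := ih (j-1) (by omega) (by omega)
      have hAprev : A (j-1) = true := by
        rcases h.colne (j-1) (by omega) with hh | hh | hh
        · exact hh
        · rw [hprev.1] at hh; exact absurd hh (by simp)
        · rw [hprev.2] at hh; exact absurd hh (by simp)
      rcases h.ccw0 (j-1) (by omega) with hc | hc | hc | hc
      · exact absurd (hc u (by omega)) (by simp [hBu])
      · exact absurd hc (by simp [hAprev])
      · exact absurd (hc v (by omega)) (by simp [hAv])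
      · rw [show j - 1 + 1 = j by omega] at hc
        exact hc
  intro j htj hjv
  exact key (j - t - 1) j (by omega) hjv

/-- Between two C-ones (positions p₀ < t) with a B-one at u ≥ t, rows A and B vanish on [p₀, t). -/
lemma downC (h : Bax3 n A B C) {p₀ t u : ℕ} (hC0 : C p₀ = true) (hCt : C t = true)
    (hBu : B u = true) (h1 : p₀ < t) (h2 : t ≤ u) (h3 : u < n) :
    ∀ j, p₀ ≤ j → j < t → A j = false ∧ B j = false := by
  have key : ∀ d j, j + d + 1 = t → p₀ ≤ j → A j = false ∧ B j = false := by
    intro d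
    induction d with
    | zero =>
      intro j hjt hpj
      rcases h.ccw1 j (by omega) with hc | hc | hc | hc
      · exact absurd (hc p₀ hpj) (by simp [hC0])
      · exact hc
      · exact absurd (hc u (by omega)) (by simp [hBu])
      · rw [show j + 1 = t by omega] at hc
        exact absurd hc (by simp [hCt])
    | succ d ih =>
      intro j hjt hpj
      have hnext : A (j+1) = false ∧ B (j+1) = false := ih (j+1) (by omega) (by omega)
      have hCnext : C (j+1) = true := by
        rcases h.colne (j+1) (by omega) with hh | hh | hh
        · rw [hnext.1] at hh; exact absurd hh (by simp)
        · rw [hnext.2] at hh; exact absurd hh (by simp)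
        · exact hh
      rcases h.ccw1 j (by omega) with hc | hc | hc | hc
      · exact absurd (hc p₀ hpj) (by simp [hC0])
      · exact hc
      · exact absurd (hc u (by omega)) (by simp [hBu])
      · exact absurd hc (by simp [hCnext])
  intro j hpj hjt
  exact key (t - j - 1) j (by omega) hpj

/-- Between two C-ones (positions t < v) with a B-one at u ≤ t, rows A and B vanish on (t, v]. -/
lemma upC (h : Bax3 n A B C) {u t v : ℕ} (hBu : B u = true) (hCt : C t = true)
    (hCv : C v = true) (h1 : u ≤ t) (h2 : t < v) (h3 : v < n) :
    ∀ j, t < j → j ≤ v → A j = false ∧ B j = false := by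
  have key : ∀ d j, t + d + 1 = j → j ≤ v → A j = false ∧ B j = false := by
    intro d
    induction d with
    | zero =>
      intro j hjt hjv
      rcases h.cw1 (j-1) (by omega) with hc | hc | hc | hc
      · exact absurd (hc u (by omega)) (by simp [hBu])
      · rw [show j - 1 + 1 = j by omega] at hc
        exact hc
      · exact absurd (hc v (by omega)) (by simp [hCv])
      · rw [show j - 1 = t by omega] at hc
        exact absurd hc (by simp [hCt])
    | succ d ih =>
      intro j hjt hjv
      have hprev : A (j-1) = false ∧ B (j-1) = false := ih (j-1) (by omega) (by omega)
      have hCprev : C (j-1) = true := by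
        rcases h.colne (j-1) (by omega) with hh | hh | hh
        · rw [hprev.1] at hh; exact absurd hh (by simp)
        · rw [hprev.2] at hh; exact absurd hh (by simp)
        · exact hh
      rcases h.cw1 (j-1) (by omega) with hc | hc | hc | hc
      · exact absurd (hc u (by omega)) (by simp [hBu])
      · rw [show j - 1 + 1 = j by omega] at hc
        exact hc
      · exact absurd (hc v (by omega)) (by simp [hCv])
      · exact absurd hc (by simp [hCprev])
  intro j htj hjv
  exact key (j - t - 1) j (by omega) hjv


/-! ### Structure: parameters and column description -/

def sing (x i : ℕ) : Bool := decide (i = x)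

def Xset (t i : ℕ) : Bool :=
  match t with
  | 0 => true
  | 1 => decide (i ≠ 2)
  | 2 => decide (i ≠ 0)
  | _ => decide (i ≠ 1)

def Yset (t i : ℕ) : Bool :=
  match t with
  | 0 => true
  | 1 => decide (i ≠ 0)
  | 2 => decide (i ≠ 2)
  | _ => decide (i ≠ 1)

def colF (t p q a b j i : ℕ) : Bool :=
  if j < p then decide (i = a)
  else if j = p then Xset t i
  else if j < q then decide (i = 1)
  else if j = q then Yset t i
  else decide (i = b)

def adef (t : ℕ) : ℕ := if t = 2 then 1 else 0
def bdef (t : ℕ) : ℕ := if t = 1 then 1 else 0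

def POK (n t p q a b : ℕ) : Prop :=
  q < n ∧ a < 3 ∧ b < 3 ∧
  ((t = 0 ∧ p = q) ∨
   (t = 1 ∧ p < q ∧ a ≤ 1 ∧ 1 ≤ b) ∨
   (t = 2 ∧ p < q ∧ 1 ≤ a ∧ b ≤ 1) ∨
   (t = 3 ∧ p + 1 < q ∧ a ≠ 1 ∧ b ≠ 1)) ∧
  (p = 0 → a = adef t) ∧ (q = n - 1 → b = bdef t)

def Desc (n t p q a b : ℕ) (A B C : ℕ → Bool) : Prop :=
  ∀ j, j < n → A j = colF t p q a b j 0 ∧ B j = colF t p q a b j 1 ∧ C j = colF t p q a b j 2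

def wt (A B C : ℕ → Bool) (j : ℕ) : ℕ := (A j).toNat + (B j).toNat + (C j).toNat

def colIs (A B C : ℕ → Bool) (j x : ℕ) : Prop :=
  A j = decide ((0:ℕ) = x) ∧ B j = decide ((1:ℕ) = x) ∧ C j = decide ((2:ℕ) = x)

variable {n : ℕ} {A B C : ℕ → Bool}

lemma getletter {j : ℕ} (hw : wt A B C j = 1) : ∃ x, x < 3 ∧ colIs A B C j x := by
  rcases hA : A j <;> rcases hB : B j <;> rcases hC : C j <;>
    simp [wt, hA, hB, hC] at hw ⊢
  · exact ⟨2, by norm_num, by simp [colIs, hA, hB, hC]⟩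
  · exact ⟨1, by norm_num, by simp [colIs, hA, hB, hC]⟩
  · exact ⟨0, by norm_num, by simp [colIs, hA, hB, hC]⟩

lemma w3all {p : ℕ} (hw : wt A B C p = 3) : A p = true ∧ B p = true ∧ C p = true := by
  rcases hA : A p <;> rcases hB : B p <;> rcases hC : C p <;>
    simp [wt, hA, hB, hC] at hw ⊢

lemma w2cases {p : ℕ} (hw : wt A B C p = 2) :
    (A p = true ∧ B p = true ∧ C p = false) ∨
    (A p = true ∧ B p = false ∧ C p = true) ∨
    (A p = false ∧ B p = true ∧ C p = true) := by
  rcases hA : A p <;> rcases hB : B p <;> rcases hC : C p <;>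
    simp [wt, hA, hB, hC] at hw ⊢

/-- Distribution of column weights: one weight-3 column or two weight-2 columns. -/
lemma weight_cases {w : ℕ → ℕ} (h1 : ∀ j, j < n → 1 ≤ w j)
    (hs : ∑ j ∈ Finset.range n, w j = n + 2) :
    (∃ p, p < n ∧ w p = 3 ∧ ∀ j, j < n → j ≠ p → w j = 1) ∨
    (∃ p q, p < q ∧ q < n ∧ w p = 2 ∧ w q = 2 ∧
      ∀ j, j < n → j ≠ p → j ≠ q → w j = 1) := by
  classical
  have he : ∑ j ∈ Finset.range n, (w j - 1) = 2 := by
    have h2 : ∑ j ∈ Finset.range n, w j = ∑ j ∈ Finset.range n, ((w j - 1) + 1) := by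
      apply Finset.sum_congr rfl
      intro j hj
      have := h1 j (Finset.mem_range.mp hj)
      omega
    rw [h2, Finset.sum_add_distrib] at hs
    simp at hs
    omega
  set F := (Finset.range n).filter (fun j => w j - 1 ≠ 0) with hFdef
  have hFsum : ∑ j ∈ F, (w j - 1) = 2 := by
    rw [hFdef, Finset.sum_filter_ne_zero]
    exact he
  have hcard : F.card ≤ 2 := by
    have h1' : ∀ x ∈ F, 1 ≤ w x - 1 := by
      intro x hx
      have := (Finset.mem_filter.mp hx).2
      omega
    have := Finset.card_nsmul_le_sum F (fun j => w j - 1) 1 h1'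
    simpa [hFsum] using this
  have hpos : 1 ≤ F.card := by
    by_contra hc
    have : F = ∅ := by
      apply Finset.card_eq_zero.mp
      omega
    rw [this] at hFsum
    simp at hFsum
  have hout : ∀ j, j < n → j ∉ F → w j = 1 := by
    intro j hj hjF
    have : ¬ (w j - 1 ≠ 0) := by
      intro hne
      exact hjF (Finset.mem_filter.mpr ⟨Finset.mem_range.mpr hj, hne⟩)
    have := h1 j hj
    omega
  interval_cases hc : F.card
  · -- card 1
    obtain ⟨p, hp⟩ := Finset.card_eq_one.mp hc
    have hpF : p ∈ F := by rw [hp]; simp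
    have hpn : p < n := Finset.mem_range.mp (Finset.mem_filter.mp hpF).1
    have hsum : w p - 1 = 2 := by
      rw [hp, Finset.sum_singleton] at hFsum
      exact hFsum
    left
    refine ⟨p, hpn, by have := h1 p hpn; omega, ?_⟩
    intro j hj hjp
    apply hout j hj
    rw [hp]
    simp [hjp]
  · -- card 2
    obtain ⟨p, q, hpq, hp⟩ := Finset.card_eq_two.mp hc
    have hpF : p ∈ F := by rw [hp]; simp
    have hqF : q ∈ F := by rw [hp]; simp
    have hpn : p < n := Finset.mem_range.mp (Finset.mem_filter.mp hpF).1
    have hqn : q < n := Finset.mem_range.mp (Finset.mem_filter.mp hqF).1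
    have hsum : (w p - 1) + (w q - 1) = 2 := by
      rw [hp, Finset.sum_pair hpq] at hFsum
      exact hFsum
    have hp1 : 1 ≤ w p - 1 := by have := (Finset.mem_filter.mp hpF).2; omega
    have hq1 : 1 ≤ w q - 1 := by have := (Finset.mem_filter.mp hqF).2; omega
    have hwp : w p = 2 := by have := h1 p hpn; omega
    have hwq : w q = 2 := by have := h1 q hqn; omega
    have hothers : ∀ j, j < n → j ≠ p → j ≠ q → w j = 1 := by
      intro j hj hjp hjq
      apply hout j hj
      rw [hp]
      simp [hjp, hjq]
    right
    rcases Nat.lt_or_ge p q with h | h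
    · exact ⟨p, q, h, hqn, hwp, hwq, hothers⟩
    · have h' : q < p := by omega
      exact ⟨q, p, h', hpn, hwq, hwp, fun j hj a b => hothers j hj b a⟩
lemma w1cases {j : ℕ} (hw : wt A B C j = 1) :
    (A j = true ∧ B j = false ∧ C j = false) ∨
    (A j = false ∧ B j = true ∧ C j = false) ∨
    (A j = false ∧ B j = false ∧ C j = true) := by
  rcases hA : A j <;> rcases hB : B j <;> rcases hC : C j <;>
    simp [wt, hA, hB, hC] at hw ⊢

lemma caseI (h : Bax3 n A B C) {p : ℕ} (hp : p < n) (hw3 : wt A B C p = 3)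
    (hone : ∀ j, j < n → j ≠ p → wt A B C j = 1) :
    ∃ t p' q a b, POK n t p' q a b ∧ Desc n t p' q a b A B C := by
  obtain ⟨hAp, hBp, hCp⟩ := w3all hw3
  -- prefix
  have hApre : ∃ a, a < 3 ∧ (p = 0 → a = 0) ∧ ∀ j, j < p →
      (A j = decide ((0:ℕ) = a) ∧ B j = decide ((1:ℕ) = a) ∧ C j = decide ((2:ℕ) = a)) := by
    by_cases hp0 : p = 0
    · exact ⟨0, by norm_num, fun _ => rfl, fun j hj => by omega⟩
    · have h0n : (0:ℕ) < n := by omega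
      have h0p : (0:ℕ) < p := by omega
      rcases w1cases (hone 0 h0n (by omega)) with ⟨ha, hb, hc⟩ | ⟨ha, hb, hc⟩ | ⟨ha, hb, hc⟩
      · refine ⟨0, by norm_num, fun h => absurd h hp0, fun j hj => ?_⟩
        rcases Nat.eq_zero_or_pos j with hj0 | hj0
        · subst hj0; simp [ha, hb, hc]
        · rcases w1cases (hone j (by omega) (by omega)) with ⟨ha', hb', hc'⟩ | ⟨ha', hb', hc'⟩ | ⟨ha', hb', hc'⟩
          · simp [ha', hb', hc']
          · exact absurd (downA h ha hAp hBp h0p (le_refl p) hp j (by omega) hj).1 (by simp [hb'])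
          · exact absurd (downA h ha hAp hBp h0p (le_refl p) hp j (by omega) hj).2 (by simp [hc'])
      · refine ⟨1, by norm_num, fun h => absurd h hp0, fun j hj => ?_⟩
        rcases Nat.eq_zero_or_pos j with hj0 | hj0
        · subst hj0; simp [ha, hb, hc]
        · rcases w1cases (hone j (by omega) (by omega)) with ⟨ha', hb', hc'⟩ | ⟨ha', hb', hc'⟩ | ⟨ha', hb', hc'⟩
          · exact absurd (upA h hb ha' hAp (by omega) hj hp p hj (le_refl p)).1 (by simp [hBp])
          · simp [ha', hb', hc']
          · exact absurd (upC h hb hc' hCp (by omega) hj hp p hj (le_refl p)).1 (by simp [hAp])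
      · refine ⟨2, by norm_num, fun h => absurd h hp0, fun j hj => ?_⟩
        rcases Nat.eq_zero_or_pos j with hj0 | hj0
        · subst hj0; simp [ha, hb, hc]
        · rcases w1cases (hone j (by omega) (by omega)) with ⟨ha', hb', hc'⟩ | ⟨ha', hb', hc'⟩ | ⟨ha', hb', hc'⟩
          · exact absurd (downC h hc hCp hBp h0p (le_refl p) hp j (by omega) hj).1 (by simp [ha'])
          · exact absurd (downC h hc hCp hBp h0p (le_refl p) hp j (by omega) hj).2 (by simp [hb'])
          · simp [ha', hb', hc']
  -- suffix
  have hBsuf : ∃ b, b < 3 ∧ (p = n - 1 → b = 0) ∧ ∀ j, p < j → j < n →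
      (A j = decide ((0:ℕ) = b) ∧ B j = decide ((1:ℕ) = b) ∧ C j = decide ((2:ℕ) = b)) := by
    by_cases hpn : p = n - 1
    · exact ⟨0, by norm_num, fun _ => rfl, fun j hj hjn => by omega⟩
    · have hn1 : n - 1 < n := by omega
      have hpn1 : p < n - 1 := by omega
      rcases w1cases (hone (n-1) hn1 (by omega)) with ⟨ha, hb, hc⟩ | ⟨ha, hb, hc⟩ | ⟨ha, hb, hc⟩
      · refine ⟨0, by norm_num, fun h => absurd h hpn, fun j hj hjn => ?_⟩
        by_cases hj1 : j = n - 1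
        · subst hj1; simp [ha, hb, hc]
        · rcases w1cases (hone j hjn (by omega)) with ⟨ha', hb', hc'⟩ | ⟨ha', hb', hc'⟩ | ⟨ha', hb', hc'⟩
          · simp [ha', hb', hc']
          · exact absurd (upA h hBp hAp ha (le_refl p) hpn1 hn1 j hj (by omega)).1 (by simp [hb'])
          · exact absurd (upA h hBp hAp ha (le_refl p) hpn1 hn1 j hj (by omega)).2 (by simp [hc'])
      · refine ⟨1, by norm_num, fun h => absurd h hpn, fun j hj hjn => ?_⟩
        by_cases hj1 : j = n - 1
        · subst hj1; simp [ha, hb, hc]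
        · rcases w1cases (hone j hjn (by omega)) with ⟨ha', hb', hc'⟩ | ⟨ha', hb', hc'⟩ | ⟨ha', hb', hc'⟩
          · exact absurd (downA h hAp ha' hb hj (by omega) hn1 p (le_refl p) hj).1 (by simp [hBp])
          · simp [ha', hb', hc']
          · exact absurd (downC h hCp hc' hb hj (by omega) hn1 p (le_refl p) hj).2 (by simp [hBp])
      · refine ⟨2, by norm_num, fun h => absurd h hpn, fun j hj hjn => ?_⟩
        by_cases hj1 : j = n - 1
        · subst hj1; simp [ha, hb, hc]
        · rcases w1cases (hone j hjn (by omega)) with ⟨ha', hb', hc'⟩ | ⟨ha', hb', hc'⟩ | ⟨ha', hb', hc'⟩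
          · exact absurd (upC h hBp hCp hc (le_refl p) hpn1 hn1 j hj (by omega)).1 (by simp [ha'])
          · exact absurd (upC h hBp hCp hc (le_refl p) hpn1 hn1 j hj (by omega)).2 (by simp [hb'])
          · simp [ha', hb', hc']
  obtain ⟨a, ha3, ha0, hpre⟩ := hApre
  obtain ⟨b, hb3, hb0, hsuf⟩ := hBsuf
  refine ⟨0, p, p, a, b, ⟨hp, ha3, hb3, Or.inl ⟨rfl, rfl⟩, fun h0 => by simpa [adef] using ha0 h0,
    fun hn => by simpa [bdef] using hb0 hn⟩, ?_⟩
  intro j hj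
  rcases Nat.lt_trichotomy j p with hc | hc | hc
  · obtain ⟨h1, h2, h3⟩ := hpre j hc
    simp only [colF, if_pos hc]
    exact ⟨h1, h2, h3⟩
  · subst hc
    simp only [colF, lt_irrefl, if_false, if_pos rfl, Xset]
    exact ⟨hAp, hBp, hCp⟩
  · obtain ⟨h1, h2, h3⟩ := hsuf j hc hj
    have e : ∀ i, colF 0 p p a b j i = decide (i = b) := by
      intro i
      simp only [colF]
      rw [if_neg (by omega), if_neg (by omega), if_neg (by omega), if_neg (by omega)]
    rw [e 0, e 1, e 2]
    exact ⟨h1, h2, h3⟩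
lemma caseII_0112 (h : Bax3 n A B C) {p q : ℕ} (hpq : p < q) (hq : q < n)
    (hAp : A p = true) (hBp : B p = true) (hCp : C p = false)
    (hAq : A q = false) (hBq : B q = true) (hCq : C q = true)
    (hone : ∀ j, j < n → j ≠ p → j ≠ q → wt A B C j = 1) :
    ∃ t p' q' a b, POK n t p' q' a b ∧ Desc n t p' q' a b A B C := by
  have hp : p < n := by omega
  -- no 2 in prefix
  have hno2 : ∀ j, j < p → C j = false := by
    intro j hj
    by_contra hc
    have hc' : C j = true := by rcases hC : C j <;> simp_all
    exact absurd (downC h hc' hCq hBq (by omega) (le_refl q) hq p (by omega) hpq).1 (by simp [hAp])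
  -- no 0 in suffix
  have hno0 : ∀ j, q < j → j < n → A j = false := by
    intro j hj hjn
    by_contra hc
    have hc' : A j = true := by rcases hA : A j <;> simp_all
    exact absurd (upA h hBp hAp hc' (le_refl p) (by omega) hjn q (by omega) (by omega)).1 (by simp [hBq])
  -- middle
  have hmid : ∀ j, p < j → j < q → (A j = false ∧ B j = true ∧ C j = false) := by
    intro j hj hjq
    rcases w1cases (hone j (by omega) (by omega) (by omega)) with ⟨ha', hb', hc'⟩ | ⟨ha', hb', hc'⟩ | ⟨ha', hb', hc'⟩
    · exact absurd (downA h hAp ha' hBq hj (by omega) hq p (le_refl p) hj).1 (by simp [hBp])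
    · exact ⟨ha', hb', hc'⟩
    · exact absurd (upC h hBp hc' hCq (by omega) hjq hq q (by omega) (le_refl q)).2 (by simp [hBq])
  -- prefix
  have hApre : ∃ a, a ≤ 1 ∧ (p = 0 → a = 0) ∧ ∀ j, j < p →
      (A j = decide ((0:ℕ) = a) ∧ B j = decide ((1:ℕ) = a) ∧ C j = decide ((2:ℕ) = a)) := by
    by_cases hp0 : p = 0
    · exact ⟨0, by norm_num, fun _ => rfl, fun j hj => by omega⟩
    · rcases w1cases (hone 0 (by omega) (by omega) (by omega)) with ⟨ha, hb, hc⟩ | ⟨ha, hb, hc⟩ | ⟨ha, hb, hc⟩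
      · refine ⟨0, by norm_num, fun _ => rfl, fun j hj => ?_⟩
        rcases Nat.eq_zero_or_pos j with hj0 | hj0
        · subst hj0; simp [ha, hb, hc]
        · rcases w1cases (hone j (by omega) (by omega) (by omega)) with ⟨ha', hb', hc'⟩ | ⟨ha', hb', hc'⟩ | ⟨ha', hb', hc'⟩
          · simp [ha', hb', hc']
          · exact absurd (downA h ha hAp hBp (by omega) (le_refl p) hp j (by omega) hj).1 (by simp [hb'])
          · exact absurd (hno2 j hj) (by simp [hc'])
      · refine ⟨1, by norm_num, fun hh => absurd hh hp0, fun j hj => ?_⟩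
        rcases Nat.eq_zero_or_pos j with hj0 | hj0
        · subst hj0; simp [ha, hb, hc]
        · rcases w1cases (hone j (by omega) (by omega) (by omega)) with ⟨ha', hb', hc'⟩ | ⟨ha', hb', hc'⟩ | ⟨ha', hb', hc'⟩
          · exact absurd (upA h hb ha' hAp (by omega) hj hp p hj (le_refl p)).1 (by simp [hBp])
          · simp [ha', hb', hc']
          · exact absurd (hno2 j hj) (by simp [hc'])
      · exact absurd (hno2 0 (by omega)) (by simp [hc])
  -- suffix
  have hBsuf : ∃ b, 1 ≤ b ∧ b ≤ 2 ∧ (q = n - 1 → b = 1) ∧ ∀ j, q < j → j < n →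
      (A j = decide ((0:ℕ) = b) ∧ B j = decide ((1:ℕ) = b) ∧ C j = decide ((2:ℕ) = b)) := by
    by_cases hqn : q = n - 1
    · exact ⟨1, by norm_num, by norm_num, fun _ => rfl, fun j hj hjn => by omega⟩
    · have hn1 : n - 1 < n := by omega
      have hqn1 : q < n - 1 := by omega
      rcases w1cases (hone (n-1) hn1 (by omega) (by omega)) with ⟨ha, hb, hc⟩ | ⟨ha, hb, hc⟩ | ⟨ha, hb, hc⟩
      · exact absurd (hno0 (n-1) hqn1 hn1) (by simp [ha])
      · refine ⟨1, by norm_num, by norm_num, fun _ => rfl, fun j hj hjn => ?_⟩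
        by_cases hj1 : j = n - 1
        · subst hj1; simp [ha, hb, hc]
        · rcases w1cases (hone j hjn (by omega) (by omega)) with ⟨ha', hb', hc'⟩ | ⟨ha', hb', hc'⟩ | ⟨ha', hb', hc'⟩
          · exact absurd (hno0 j hj hjn) (by simp [ha'])
          · simp [ha', hb', hc']
          · exact absurd (downC h hCq hc' hb hj (by omega) hn1 q (le_refl q) hj).2 (by simp [hBq])
      · refine ⟨2, by norm_num, by norm_num, fun hh => absurd hh hqn, fun j hj hjn => ?_⟩
        by_cases hj1 : j = n - 1
        · subst hj1; simp [ha, hb, hc]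
        · rcases w1cases (hone j hjn (by omega) (by omega)) with ⟨ha', hb', hc'⟩ | ⟨ha', hb', hc'⟩ | ⟨ha', hb', hc'⟩
          · exact absurd (hno0 j hj hjn) (by simp [ha'])
          · exact absurd (upC h hBq hCq hc (le_refl q) hqn1 hn1 j hj (by omega)).2 (by simp [hb'])
          · simp [ha', hb', hc']
  obtain ⟨a, ha1, ha0, hpre⟩ := hApre
  obtain ⟨b, hb1, hb2, hbn, hsuf⟩ := hBsuf
  refine ⟨1, p, q, a, b, ⟨hq, by omega, by omega, Or.inr (Or.inl ⟨rfl, hpq, ha1, hb1⟩),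
    fun h0 => by simpa [adef] using ha0 h0, fun hn => by simpa [bdef] using hbn hn⟩, ?_⟩
  intro j hj
  rcases Nat.lt_trichotomy j p with hc | hc | hc
  · obtain ⟨h1, h2, h3⟩ := hpre j hc
    simp only [colF, if_pos hc]
    exact ⟨h1, h2, h3⟩
  · have e : ∀ i, colF 1 p q a b j i = Xset 1 i := by
      intro i
      simp only [colF]
      rw [if_neg (by omega), if_pos hc]
    rw [e 0, e 1, e 2, hc]
    simp [Xset, hAp, hBp, hCp]
  · rcases Nat.lt_trichotomy j q with hc2 | hc2 | hc2
    · obtain ⟨h1, h2, h3⟩ := hmid j hc hc2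
      have e : ∀ i, colF 1 p q a b j i = decide (i = 1) := by
        intro i
        simp only [colF]
        rw [if_neg (by omega), if_neg (by omega), if_pos hc2]
      rw [e 0, e 1, e 2]
      simp [h1, h2, h3]
    · have e : ∀ i, colF 1 p q a b j i = Yset 1 i := by
        intro i
        simp only [colF]
        rw [if_neg (by omega), if_neg (by omega), if_neg (by omega), if_pos hc2]
      rw [e 0, e 1, e 2, hc2]
      simp [Yset, hAq, hBq, hCq]
    · obtain ⟨h1, h2, h3⟩ := hsuf j hc2 hj
      have e : ∀ i, colF 1 p q a b j i = decide (i = b) := by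
        intro i
        simp only [colF]
        rw [if_neg (by omega), if_neg (by omega), if_neg (by omega), if_neg (by omega)]
      rw [e 0, e 1, e 2]
      exact ⟨h1, h2, h3⟩
lemma caseII_1201 (h : Bax3 n A B C) {p q : ℕ} (hpq : p < q) (hq : q < n)
    (hAp : A p = false) (hBp : B p = true) (hCp : C p = true)
    (hAq : A q = true) (hBq : B q = true) (hCq : C q = false)
    (hone : ∀ j, j < n → j ≠ p → j ≠ q → wt A B C j = 1) :
    ∃ t p' q' a b, POK n t p' q' a b ∧ Desc n t p' q' a b A B C := by
  have hp : p < n := by omega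
  have hno0 : ∀ j, j < p → A j = false := by
    intro j hj
    by_contra hc
    have hc' : A j = true := by rcases hA : A j <;> simp_all
    exact absurd (downA h hc' hAq hBq (by omega) (le_refl q) hq p (by omega) hpq).1 (by simp [hBp])
  have hno2 : ∀ j, q < j → j < n → C j = false := by
    intro j hj hjn
    by_contra hc
    have hc' : C j = true := by rcases hC : C j <;> simp_all
    exact absurd (upC h hBp hCp hc' (le_refl p) (by omega) hjn q (by omega) (by omega)).1 (by simp [hAq])
  have hmid : ∀ j, p < j → j < q → (A j = false ∧ B j = true ∧ C j = false) := by
    intro j hj hjq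
    rcases w1cases (hone j (by omega) (by omega) (by omega)) with ⟨ha', hb', hc'⟩ | ⟨ha', hb', hc'⟩ | ⟨ha', hb', hc'⟩
    · exact absurd (upA h hBp ha' hAq (by omega) hjq hq q (by omega) (le_refl q)).1 (by simp [hBq])
    · exact ⟨ha', hb', hc'⟩
    · exact absurd (downC h hCp hc' hBq hj (by omega) hq p (le_refl p) hj).2 (by simp [hBp])
  have hApre : ∃ a, 1 ≤ a ∧ a ≤ 2 ∧ (p = 0 → a = 1) ∧ ∀ j, j < p →
      (A j = decide ((0:ℕ) = a) ∧ B j = decide ((1:ℕ) = a) ∧ C j = decide ((2:ℕ) = a)) := by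
    by_cases hp0 : p = 0
    · exact ⟨1, by norm_num, by norm_num, fun _ => rfl, fun j hj => by omega⟩
    · rcases w1cases (hone 0 (by omega) (by omega) (by omega)) with ⟨ha, hb, hc⟩ | ⟨ha, hb, hc⟩ | ⟨ha, hb, hc⟩
      · exact absurd (hno0 0 (by omega)) (by simp [ha])
      · refine ⟨1, by norm_num, by norm_num, fun _ => rfl, fun j hj => ?_⟩
        rcases Nat.eq_zero_or_pos j with hj0 | hj0
        · subst hj0; simp [ha, hb, hc]
        · rcases w1cases (hone j (by omega) (by omega) (by omega)) with ⟨ha', hb', hc'⟩ | ⟨ha', hb', hc'⟩ | ⟨ha', hb', hc'⟩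
          · exact absurd (hno0 j hj) (by simp [ha'])
          · simp [ha', hb', hc']
          · exact absurd (upC h hb hc' hCp (by omega) hj hp p hj (le_refl p)).2 (by simp [hBp])
      · refine ⟨2, by norm_num, by norm_num, fun hh => absurd hh hp0, fun j hj => ?_⟩
        rcases Nat.eq_zero_or_pos j with hj0 | hj0
        · subst hj0; simp [ha, hb, hc]
        · rcases w1cases (hone j (by omega) (by omega) (by omega)) with ⟨ha', hb', hc'⟩ | ⟨ha', hb', hc'⟩ | ⟨ha', hb', hc'⟩
          · exact absurd (hno0 j hj) (by simp [ha'])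
          · exact absurd (downC h hc hCp hBp (by omega) (le_refl p) hp j (by omega) hj).2 (by simp [hb'])
          · simp [ha', hb', hc']
  have hBsuf : ∃ b, b ≤ 1 ∧ (q = n - 1 → b = 0) ∧ ∀ j, q < j → j < n →
      (A j = decide ((0:ℕ) = b) ∧ B j = decide ((1:ℕ) = b) ∧ C j = decide ((2:ℕ) = b)) := by
    by_cases hqn : q = n - 1
    · exact ⟨0, by norm_num, fun _ => rfl, fun j hj hjn => by omega⟩
    · have hn1 : n - 1 < n := by omega
      have hqn1 : q < n - 1 := by omega
      rcases w1cases (hone (n-1) hn1 (by omega) (by omega)) with ⟨ha, hb, hc⟩ | ⟨ha, hb, hc⟩ | ⟨ha, hb, hc⟩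
      · refine ⟨0, by norm_num, fun _ => rfl, fun j hj hjn => ?_⟩
        by_cases hj1 : j = n - 1
        · subst hj1; simp [ha, hb, hc]
        · rcases w1cases (hone j hjn (by omega) (by omega)) with ⟨ha', hb', hc'⟩ | ⟨ha', hb', hc'⟩ | ⟨ha', hb', hc'⟩
          · simp [ha', hb', hc']
          · exact absurd (upA h hBq hAq ha (le_refl q) hqn1 hn1 j hj (by omega)).1 (by simp [hb'])
          · exact absurd (hno2 j hj hjn) (by simp [hc'])
      · refine ⟨1, by norm_num, fun hh => absurd hh hqn, fun j hj hjn => ?_⟩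
        by_cases hj1 : j = n - 1
        · subst hj1; simp [ha, hb, hc]
        · rcases w1cases (hone j hjn (by omega) (by omega)) with ⟨ha', hb', hc'⟩ | ⟨ha', hb', hc'⟩ | ⟨ha', hb', hc'⟩
          · exact absurd (downA h hAq ha' hb hj (by omega) hn1 q (le_refl q) hj).1 (by simp [hBq])
          · simp [ha', hb', hc']
          · exact absurd (hno2 j hj hjn) (by simp [hc'])
      · exact absurd (hno2 (n-1) hqn1 hn1) (by simp [hc])
  obtain ⟨a, ha1, ha2, ha0, hpre⟩ := hApre
  obtain ⟨b, hb1, hbn, hsuf⟩ := hBsuf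
  refine ⟨2, p, q, a, b, ⟨hq, by omega, by omega, Or.inr (Or.inr (Or.inl ⟨rfl, hpq, ha1, hb1⟩)),
    fun h0 => by simpa [adef] using ha0 h0, fun hn => by simpa [bdef] using hbn hn⟩, ?_⟩
  intro j hj
  rcases Nat.lt_trichotomy j p with hc | hc | hc
  · obtain ⟨h1, h2, h3⟩ := hpre j hc
    simp only [colF, if_pos hc]
    exact ⟨h1, h2, h3⟩
  · have e : ∀ i, colF 2 p q a b j i = Xset 2 i := by
      intro i
      simp only [colF]
      rw [if_neg (by omega), if_pos hc]
    rw [e 0, e 1, e 2, hc]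
    simp [Xset, hAp, hBp, hCp]
  · rcases Nat.lt_trichotomy j q with hc2 | hc2 | hc2
    · obtain ⟨h1, h2, h3⟩ := hmid j hc hc2
      have e : ∀ i, colF 2 p q a b j i = decide (i = 1) := by
        intro i
        simp only [colF]
        rw [if_neg (by omega), if_neg (by omega), if_pos hc2]
      rw [e 0, e 1, e 2]
      simp [h1, h2, h3]
    · have e : ∀ i, colF 2 p q a b j i = Yset 2 i := by
        intro i
        simp only [colF]
        rw [if_neg (by omega), if_neg (by omega), if_neg (by omega), if_pos hc2]
      rw [e 0, e 1, e 2, hc2]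
      simp [Yset, hAq, hBq, hCq]
    · obtain ⟨h1, h2, h3⟩ := hsuf j hc2 hj
      have e : ∀ i, colF 2 p q a b j i = decide (i = b) := by
        intro i
        simp only [colF]
        rw [if_neg (by omega), if_neg (by omega), if_neg (by omega), if_neg (by omega)]
      rw [e 0, e 1, e 2]
      exact ⟨h1, h2, h3⟩

lemma caseII_0202 (h : Bax3 n A B C) {p q : ℕ} (hpq : p < q) (hq : q < n)
    (hAp : A p = true) (hBp : B p = false) (hCp : C p = true)
    (hAq : A q = true) (hBq : B q = false) (hCq : C q = true)
    (hone : ∀ j, j < n → j ≠ p → j ≠ q → wt A B C j = 1) :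
    ∃ t p' q' a b, POK n t p' q' a b ∧ Desc n t p' q' a b A B C := by
  have hp : p < n := by omega
  have hno1pre : ∀ j, j < p → B j = false := by
    intro j hj
    by_contra hc
    have hc' : B j = true := by rcases hB : B j <;> simp_all
    exact absurd (upA h hc' hAp hAq (by omega) hpq hq q hpq (le_refl q)).2 (by simp [hCq])
  have hno1suf : ∀ j, q < j → j < n → B j = false := by
    intro j hj hjn
    by_contra hc
    have hc' : B j = true := by rcases hB : B j <;> simp_all
    exact absurd (downA h hAp hAq hc' hpq (by omega) hjn p (le_refl p) hpq).2 (by simp [hCp])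
  -- a B-one exists, and must lie strictly between p and q
  obtain ⟨s, hsn, hBs⟩ := h.rowB
  have hsp : p < s := by
    rcases Nat.lt_trichotomy s p with hh | hh | hh
    · exact absurd (hno1pre s hh) (by simp [hBs])
    · subst hh; exact absurd hBs (by simp [hBp])
    · exact hh
  have hsq : s < q := by
    rcases Nat.lt_trichotomy s q with hh | hh | hh
    · exact hh
    · subst hh; exact absurd hBs (by simp [hBq])
    · exact absurd (hno1suf s hh hsn) (by simp [hBs])
  have hp1q : p + 1 < q := by omega
  have hmid : ∀ j, p < j → j < q → (A j = false ∧ B j = true ∧ C j = false) := by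
    intro j hj hjq
    rcases w1cases (hone j (by omega) (by omega) (by omega)) with ⟨ha', hb', hc'⟩ | ⟨ha', hb', hc'⟩ | ⟨ha', hb', hc'⟩
    · rcases Nat.lt_trichotomy s j with hh | hh | hh
      · exact absurd (upA h hBs ha' hAq (by omega) hjq hq q (by omega) (le_refl q)).2 (by simp [hCq])
      · subst hh; exact absurd hBs (by simp [hb'])
      · exact absurd (downA h hAp ha' hBs hj (by omega) hsn p (le_refl p) hj).2 (by simp [hCp])
    · exact ⟨ha', hb', hc'⟩
    · rcases Nat.lt_trichotomy s j with hh | hh | hh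
      · exact absurd (upC h hBs hc' hCq (by omega) hjq hq q (by omega) (le_refl q)).1 (by simp [hAq])
      · subst hh; exact absurd hBs (by simp [hb'])
      · exact absurd (downC h hCp hc' hBs hj (by omega) hsn p (le_refl p) hj).1 (by simp [hAp])
  have hApre : ∃ a, a ≠ 1 ∧ a < 3 ∧ (p = 0 → a = 0) ∧ ∀ j, j < p →
      (A j = decide ((0:ℕ) = a) ∧ B j = decide ((1:ℕ) = a) ∧ C j = decide ((2:ℕ) = a)) := by
    by_cases hp0 : p = 0
    · exact ⟨0, by norm_num, by norm_num, fun _ => rfl, fun j hj => by omega⟩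
    · rcases w1cases (hone 0 (by omega) (by omega) (by omega)) with ⟨ha, hb, hc⟩ | ⟨ha, hb, hc⟩ | ⟨ha, hb, hc⟩
      · refine ⟨0, by norm_num, by norm_num, fun _ => rfl, fun j hj => ?_⟩
        rcases Nat.eq_zero_or_pos j with hj0 | hj0
        · subst hj0; simp [ha, hb, hc]
        · rcases w1cases (hone j (by omega) (by omega) (by omega)) with ⟨ha', hb', hc'⟩ | ⟨ha', hb', hc'⟩ | ⟨ha', hb', hc'⟩
          · simp [ha', hb', hc']
          · exact absurd (hno1pre j hj) (by simp [hb'])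
          · exact absurd (downA h ha hAp hBs (by omega) (by omega) hsn j (by omega) hj).2 (by simp [hc'])
      · exact absurd (hno1pre 0 (by omega)) (by simp [hb])
      · refine ⟨2, by norm_num, by norm_num, fun hh => absurd hh hp0, fun j hj => ?_⟩
        rcases Nat.eq_zero_or_pos j with hj0 | hj0
        · subst hj0; simp [ha, hb, hc]
        · rcases w1cases (hone j (by omega) (by omega) (by omega)) with ⟨ha', hb', hc'⟩ | ⟨ha', hb', hc'⟩ | ⟨ha', hb', hc'⟩
          · exact absurd (downC h hc hCp hBs (by omega) (by omega) hsn j (by omega) hj).1 (by simp [ha'])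
          · exact absurd (hno1pre j hj) (by simp [hb'])
          · simp [ha', hb', hc']
  have hBsuf : ∃ b, b ≠ 1 ∧ b < 3 ∧ (q = n - 1 → b = 0) ∧ ∀ j, q < j → j < n →
      (A j = decide ((0:ℕ) = b) ∧ B j = decide ((1:ℕ) = b) ∧ C j = decide ((2:ℕ) = b)) := by
    by_cases hqn : q = n - 1
    · exact ⟨0, by norm_num, by norm_num, fun _ => rfl, fun j hj hjn => by omega⟩
    · have hn1 : n - 1 < n := by omega
      have hqn1 : q < n - 1 := by omega
      rcases w1cases (hone (n-1) hn1 (by omega) (by omega)) with ⟨ha, hb, hc⟩ | ⟨ha, hb, hc⟩ | ⟨ha, hb, hc⟩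
      · refine ⟨0, by norm_num, by norm_num, fun _ => rfl, fun j hj hjn => ?_⟩
        by_cases hj1 : j = n - 1
        · subst hj1; simp [ha, hb, hc]
        · rcases w1cases (hone j hjn (by omega) (by omega)) with ⟨ha', hb', hc'⟩ | ⟨ha', hb', hc'⟩ | ⟨ha', hb', hc'⟩
          · simp [ha', hb', hc']
          · exact absurd (hno1suf j hj hjn) (by simp [hb'])
          · exact absurd (upA h hBs hAq ha (by omega) hqn1 hn1 j hj (by omega)).2 (by simp [hc'])
      · exact absurd (hno1suf (n-1) hqn1 hn1) (by simp [hb])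
      · refine ⟨2, by norm_num, by norm_num, fun hh => absurd hh hqn, fun j hj hjn => ?_⟩
        by_cases hj1 : j = n - 1
        · subst hj1; simp [ha, hb, hc]
        · rcases w1cases (hone j hjn (by omega) (by omega)) with ⟨ha', hb', hc'⟩ | ⟨ha', hb', hc'⟩ | ⟨ha', hb', hc'⟩
          · exact absurd (upC h hBs hCq hc (by omega) hqn1 hn1 j hj (by omega)).1 (by simp [ha'])
          · exact absurd (hno1suf j hj hjn) (by simp [hb'])
          · simp [ha', hb', hc']
  obtain ⟨a, ha1, ha3, ha0, hpre⟩ := hApre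
  obtain ⟨b, hb1, hb3, hbn, hsuf⟩ := hBsuf
  refine ⟨3, p, q, a, b, ⟨hq, ha3, hb3, Or.inr (Or.inr (Or.inr ⟨rfl, hp1q, ha1, hb1⟩)),
    fun h0 => by simpa [adef] using ha0 h0, fun hn => by simpa [bdef] using hbn hn⟩, ?_⟩
  intro j hj
  rcases Nat.lt_trichotomy j p with hc | hc | hc
  · obtain ⟨h1, h2, h3⟩ := hpre j hc
    simp only [colF, if_pos hc]
    exact ⟨h1, h2, h3⟩
  · have e : ∀ i, colF 3 p q a b j i = Xset 3 i := by
      intro i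
      simp only [colF]
      rw [if_neg (by omega), if_pos hc]
    rw [e 0, e 1, e 2, hc]
    simp [Xset, hAp, hBp, hCp]
  · rcases Nat.lt_trichotomy j q with hc2 | hc2 | hc2
    · obtain ⟨h1, h2, h3⟩ := hmid j hc hc2
      have e : ∀ i, colF 3 p q a b j i = decide (i = 1) := by
        intro i
        simp only [colF]
        rw [if_neg (by omega), if_neg (by omega), if_pos hc2]
      rw [e 0, e 1, e 2]
      simp [h1, h2, h3]
    · have e : ∀ i, colF 3 p q a b j i = Yset 3 i := by
        intro i
        simp only [colF]
        rw [if_neg (by omega), if_neg (by omega), if_neg (by omega), if_pos hc2]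
      rw [e 0, e 1, e 2, hc2]
      simp [Yset, hAq, hBq, hCq]
    · obtain ⟨h1, h2, h3⟩ := hsuf j hc2 hj
      have e : ∀ i, colF 3 p q a b j i = decide (i = b) := by
        intro i
        simp only [colF]
        rw [if_neg (by omega), if_neg (by omega), if_neg (by omega), if_neg (by omega)]
      rw [e 0, e 1, e 2]
      exact ⟨h1, h2, h3⟩

theorem backward (h : Bax3 n A B C) (hw : ∑ j ∈ Finset.range n, wt A B C j = n + 2) :
    ∃ t p q a b, POK n t p q a b ∧ Desc n t p q a b A B C := by
  have h1 : ∀ j, j < n → 1 ≤ wt A B C j := by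
    intro j hj
    rcases h.colne j hj with hh | hh | hh <;> simp [wt, hh] <;> omega
  rcases weight_cases h1 hw with ⟨p, hp, hw3, hone⟩ | ⟨p, q, hpq, hq, hwp, hwq, hone⟩
  · exact caseI h hp hw3 hone
  · rcases w2cases hwp with ⟨hAp, hBp, hCp⟩ | ⟨hAp, hBp, hCp⟩ | ⟨hAp, hBp, hCp⟩ <;>
      rcases w2cases hwq with ⟨hAq, hBq, hCq⟩ | ⟨hAq, hBq, hCq⟩ | ⟨hAq, hBq, hCq⟩
    · exact absurd (downA h hAp hAq hBq hpq (le_refl q) hq p (le_refl p) hpq).1 (by simp [hBp])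
    · exact absurd (upA h hBp hAp hAq (le_refl p) hpq hq q hpq (le_refl q)).2 (by simp [hCq])
    · exact caseII_0112 h hpq hq hAp hBp hCp hAq hBq hCq hone
    · exact absurd (downA h hAp hAq hBq hpq (le_refl q) hq p (le_refl p) hpq).2 (by simp [hCp])
    · exact caseII_0202 h hpq hq hAp hBp hCp hAq hBq hCq hone
    · exact absurd (downC h hCp hCq hBq hpq (le_refl q) hq p (le_refl p) hpq).1 (by simp [hAp])
    · exact caseII_1201 h hpq hq hAp hBp hCp hAq hBq hCq hone
    · exact absurd (upC h hBp hCp hCq (le_refl p) hpq hq q hpq (le_refl q)).1 (by simp [hAq])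
    · exact absurd (downC h hCp hCq hBq hpq (le_refl q) hq p (le_refl p) hpq).2 (by simp [hBp])


lemma fwd0 (bA : ∀ t, n ≤ t → A t = false) (bB : ∀ t, n ≤ t → B t = false)
    (bC : ∀ t, n ≤ t → C t = false) {p q a b : ℕ} (hq : q < n) (ha3 : a < 3) (hb3 : b < 3) (hpq : p = q)
    (hD : Desc n 0 p q a b A B C) : Bax3 n A B C := by
  subst hpq
  have hp : p < n := hq
  have pre : ∀ j, j < p → (A j = decide ((0:ℕ) = a) ∧ B j = decide ((1:ℕ) = a) ∧ C j = decide ((2:ℕ) = a)) := by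
    intro j hj
    have := hD j (by omega)
    rw [show colF 0 p p a b j 0 = decide ((0:ℕ) = a) by simp only [colF]; rw [if_pos hj],
        show colF 0 p p a b j 1 = decide ((1:ℕ) = a) by simp only [colF]; rw [if_pos hj],
        show colF 0 p p a b j 2 = decide ((2:ℕ) = a) by simp only [colF]; rw [if_pos hj]] at this
    exact this
  have atp : A p = true ∧ B p = true ∧ C p = true := by
    have := hD p hp
    rw [show colF 0 p p a b p 0 = true by simp [colF, Xset],
        show colF 0 p p a b p 1 = true by simp [colF, Xset],
        show colF 0 p p a b p 2 = true by simp [colF, Xset]] at this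
    exact this
  have suf : ∀ j, p < j → j < n → (A j = decide ((0:ℕ) = b) ∧ B j = decide ((1:ℕ) = b) ∧ C j = decide ((2:ℕ) = b)) := by
    intro j hj hjn
    have := hD j hjn
    have e : ∀ i, colF 0 p p a b j i = decide (i = b) := by
      intro i
      simp only [colF]
      rw [if_neg (by omega), if_neg (by omega), if_neg (by omega), if_neg (by omega)]
    rw [e 0, e 1, e 2] at this
    exact this
  -- generic row-value accessors
  have vA : ∀ j, A j = false ∨ (j < p ∧ a = 0) ∨ j = p ∨ (p < j ∧ j < n ∧ b = 0) := by
    intro j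
    by_cases hjn : j < n
    · rcases Nat.lt_trichotomy j p with hc | hc | hc
      · rcases eq_or_ne a 0 with h0 | h0
        · exact Or.inr (Or.inl ⟨hc, h0⟩)
        · exact Or.inl (by rw [(pre j hc).1]; simp; omega)
      · exact Or.inr (Or.inr (Or.inl hc))
      · rcases eq_or_ne b 0 with h0 | h0
        · exact Or.inr (Or.inr (Or.inr ⟨hc, hjn, h0⟩))
        · exact Or.inl (by rw [(suf j hc hjn).1]; simp; omega)
    · exact Or.inl (bA j (by omega))
  refine ⟨bA, bB, bC, ⟨p, hp, atp.1⟩, ⟨p, hp, atp.2.1⟩, ⟨p, hp, atp.2.2⟩, ?_, ?_, ?_, ?_, ?_⟩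
  · -- columns nonempty
    intro j hj
    rcases Nat.lt_trichotomy j p with hc | hc | hc
    · obtain ⟨h1, h2, h3⟩ := pre j hc
      interval_cases a <;> simp_all
    · rw [hc]; exact Or.inl atp.1
    · obtain ⟨h1, h2, h3⟩ := suf j hc hj
      interval_cases b <;> simp_all
  · -- cw0
    intro j hj
    rcases Nat.lt_trichotomy j p with hc | hc | hc
    · rcases eq_or_ne a 0 with h0 | h0
      · refine Or.inr (Or.inr (Or.inr ⟨?_, ?_⟩))
        · rw [(pre j hc).2.1]; simp [h0]
        · rw [(pre j hc).2.2]; simp [h0]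
      · refine Or.inl ?_
        intro t' ht'
        rw [(pre t' (by omega)).1]; simp; omega
    · rcases eq_or_ne b 0 with h0 | h0
      · refine Or.inr (Or.inr (Or.inl ?_))
        intro t' ht'
        by_cases ht'n : t' < n
        · rw [(suf t' (by omega) ht'n).2.1]; simp; omega
        · exact bB t' (by omega)
      · refine Or.inr (Or.inl ?_)
        rw [(suf (j+1) (by omega) hj).1]; simp; omega
    · rcases eq_or_ne b 0 with h0 | h0
      · refine Or.inr (Or.inr (Or.inr ⟨?_, ?_⟩))
        · rw [(suf j hc (by omega)).2.1]; simp; omega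
        · rw [(suf j hc (by omega)).2.2]; simp; omega
      · refine Or.inr (Or.inl ?_)
        rw [(suf (j+1) (by omega) hj).1]; simp; omega
  · -- ccw0
    intro j hj
    rcases Nat.lt_trichotomy j p with hc | hc | hc
    · rcases eq_or_ne a 0 with h0 | h0
      · refine Or.inl ?_
        intro t' ht'
        rw [(pre t' (by omega)).2.1]; simp; omega
      · refine Or.inr (Or.inl ?_)
        rw [(pre j hc).1]; simp; omega
    · rcases eq_or_ne b 0 with h0 | h0
      · refine Or.inr (Or.inr (Or.inr ⟨?_, ?_⟩))
        · rw [(suf (j+1) (by omega) hj).2.1]; simp; omega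
        · rw [(suf (j+1) (by omega) hj).2.2]; simp; omega
      · refine Or.inr (Or.inr (Or.inl ?_))
        intro t' ht'
        by_cases ht'n : t' < n
        · rw [(suf t' (by omega) ht'n).1]; simp; omega
        · exact bA t' (by omega)
    · rcases eq_or_ne b 0 with h0 | h0
      · refine Or.inr (Or.inr (Or.inr ⟨?_, ?_⟩))
        · rw [(suf (j+1) (by omega) hj).2.1]; simp; omega
        · rw [(suf (j+1) (by omega) hj).2.2]; simp; omega
      · refine Or.inr (Or.inl ?_)
        rw [(suf j hc (by omega)).1]; simp; omega
  · -- cw1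
    intro j hj
    rcases Nat.lt_trichotomy j p with hc | hc | hc
    · rcases eq_or_ne a 1 with h0 | h0
      · refine Or.inr (Or.inr (Or.inr ?_))
        rw [(pre j hc).2.2]; simp [h0]
      · refine Or.inl ?_
        intro t' ht'
        rw [(pre t' (by omega)).2.1]; simp; omega
    · rcases eq_or_ne b 2 with h0 | h0
      · refine Or.inr (Or.inl ⟨?_, ?_⟩)
        · rw [(suf (j+1) (by omega) hj).1]; simp [h0]
        · rw [(suf (j+1) (by omega) hj).2.1]; simp [h0]
      · refine Or.inr (Or.inr (Or.inl ?_))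
        intro t' ht'
        by_cases ht'n : t' < n
        · rw [(suf t' (by omega) ht'n).2.2]; simp; omega
        · exact bC t' (by omega)
    · rcases eq_or_ne b 2 with h0 | h0
      · refine Or.inr (Or.inl ⟨?_, ?_⟩)
        · rw [(suf (j+1) (by omega) hj).1]; simp [h0]
        · rw [(suf (j+1) (by omega) hj).2.1]; simp [h0]
      · refine Or.inr (Or.inr (Or.inr ?_))
        rw [(suf j hc (by omega)).2.2]; simp; omega
  · -- ccw1
    intro j hj
    rcases Nat.lt_trichotomy j p with hc | hc | hc
    · rcases eq_or_ne a 2 with h0 | h0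
      · refine Or.inr (Or.inl ⟨?_, ?_⟩)
        · rw [(pre j hc).1]; simp [h0]
        · rw [(pre j hc).2.1]; simp [h0]
      · refine Or.inl ?_
        intro t' ht'
        rw [(pre t' (by omega)).2.2]; simp; omega
    · rcases eq_or_ne b 2 with h0 | h0
      · refine Or.inr (Or.inr (Or.inl ?_))
        intro t' ht'
        by_cases ht'n : t' < n
        · rw [(suf t' (by omega) ht'n).2.1]; simp [h0]
        · exact bB t' (by omega)
      · refine Or.inr (Or.inr (Or.inr ?_))
        rw [(suf (j+1) (by omega) hj).2.2]; simp; omega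
    · rcases eq_or_ne b 2 with h0 | h0
      · refine Or.inr (Or.inl ⟨?_, ?_⟩)
        · rw [(suf j hc (by omega)).1]; simp [h0]
        · rw [(suf j hc (by omega)).2.1]; simp [h0]
      · refine Or.inr (Or.inr (Or.inr ?_))
        rw [(suf (j+1) (by omega) hj).2.2]; simp; omega


lemma fwd1 (bA : ∀ t, n ≤ t → A t = false) (bB : ∀ t, n ≤ t → B t = false)
    (bC : ∀ t, n ≤ t → C t = false) {p q a b : ℕ} (hq : q < n) (hpq : p < q)
    (ha : a ≤ 1) (hb1 : 1 ≤ b) (hb3 : b < 3)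
    (hD : Desc n 1 p q a b A B C) : Bax3 n A B C := by
  have hp : p < n := by omega
  have pre : ∀ j, j < p → (A j = decide ((0:ℕ) = a) ∧ B j = decide ((1:ℕ) = a) ∧ C j = decide ((2:ℕ) = a)) := by
    intro j hj
    have := hD j (by omega)
    have e : ∀ i, colF 1 p q a b j i = decide (i = a) := by
      intro i; simp only [colF]; rw [if_pos hj]
    rw [e 0, e 1, e 2] at this
    exact this
  have atp : A p = true ∧ B p = true ∧ C p = false := by
    have := hD p hp
    have e : ∀ i, colF 1 p q a b p i = Xset 1 i := by
      intro i; simp only [colF]; rw [if_neg (by omega), if_pos trivial]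
    rw [e 0, e 1, e 2] at this
    simpa [Xset] using this
  have mid : ∀ j, p < j → j < q → (A j = false ∧ B j = true ∧ C j = false) := by
    intro j hj hjq
    have := hD j (by omega)
    have e : ∀ i, colF 1 p q a b j i = decide (i = 1) := by
      intro i; simp only [colF]; rw [if_neg (by omega), if_neg (by omega), if_pos hjq]
    rw [e 0, e 1, e 2] at this
    simpa using this
  have atq : A q = false ∧ B q = true ∧ C q = true := by
    have := hD q hq
    have e : ∀ i, colF 1 p q a b q i = Yset 1 i := by
      intro i; simp only [colF]; rw [if_neg (by omega), if_neg (by omega), if_neg (by omega), if_pos trivial]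
    rw [e 0, e 1, e 2] at this
    simpa [Yset] using this
  have suf : ∀ j, q < j → j < n → (A j = decide ((0:ℕ) = b) ∧ B j = decide ((1:ℕ) = b) ∧ C j = decide ((2:ℕ) = b)) := by
    intro j hj hjn
    have := hD j hjn
    have e : ∀ i, colF 1 p q a b j i = decide (i = b) := by
      intro i; simp only [colF]
      rw [if_neg (by omega), if_neg (by omega), if_neg (by omega), if_neg (by omega)]
    rw [e 0, e 1, e 2] at this
    exact this
  -- A vanishes after p
  have hAafter : ∀ t', p < t' → A t' = false := by
    intro t' ht'
    by_cases htn : t' < n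
    · rcases Nat.lt_trichotomy t' q with hc | hc | hc
      · exact (mid t' ht' hc).1
      · rw [hc]; exact atq.1
      · rw [(suf t' hc htn).1]; simp; omega
    · exact bA t' (by omega)
  -- C vanishes before q
  have hCbefore : ∀ t', t' < q → C t' = false := by
    intro t' ht'
    rcases Nat.lt_trichotomy t' p with hc | hc | hc
    · rw [(pre t' hc).2.2]; simp; omega
    · rw [hc]; exact atp.2.2
    · exact (mid t' hc ht').2.2
  refine ⟨bA, bB, bC, ⟨p, hp, atp.1⟩, ⟨p, hp, atp.2.1⟩, ⟨q, hq, atq.2.2⟩, ?_, ?_, ?_, ?_, ?_⟩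
  · intro j hj
    rcases Nat.lt_trichotomy j p with hc | hc | hc
    · obtain ⟨h1, h2, h3⟩ := pre j hc
      interval_cases a <;> simp_all
    · rw [hc]; exact Or.inl atp.1
    · rcases Nat.lt_trichotomy j q with hc2 | hc2 | hc2
      · exact Or.inr (Or.inl (mid j hc hc2).2.1)
      · rw [hc2]; exact Or.inr (Or.inl atq.2.1)
      · obtain ⟨h1, h2, h3⟩ := suf j hc2 hj
        interval_cases b <;> simp_all
  · -- cw0
    intro j hj
    rcases Nat.lt_trichotomy j p with hc | hc | hc
    · rcases eq_or_ne a 0 with h0 | h0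
      · refine Or.inr (Or.inr (Or.inr ⟨?_, ?_⟩))
        · rw [(pre j hc).2.1]; simp [h0]
        · rw [(pre j hc).2.2]; simp [h0]
      · refine Or.inl ?_
        intro t' ht'
        rw [(pre t' (by omega)).1]; simp; omega
    · exact Or.inr (Or.inl (hAafter (j+1) (by omega)))
    · exact Or.inr (Or.inl (hAafter (j+1) (by omega)))
  · -- ccw0
    intro j hj
    rcases Nat.lt_trichotomy j p with hc | hc | hc
    · rcases eq_or_ne a 0 with h0 | h0
      · refine Or.inl ?_
        intro t' ht'
        rw [(pre t' (by omega)).2.1]; simp [h0]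
      · refine Or.inr (Or.inl ?_)
        rw [(pre j hc).1]; simp; omega
    · refine Or.inr (Or.inr (Or.inl ?_))
      intro t' ht'
      exact hAafter t' (by omega)
    · exact Or.inr (Or.inl (hAafter j hc))
  · -- cw1
    intro j hj
    rcases Nat.lt_trichotomy j q with hc | hc | hc
    · rcases Nat.lt_trichotomy j p with hc2 | hc2 | hc2
      · rcases eq_or_ne a 0 with h0 | h0
        · refine Or.inl ?_
          intro t' ht'
          rw [(pre t' (by omega)).2.1]; simp [h0]
        · exact Or.inr (Or.inr (Or.inr (hCbefore j hc)))
      · exact Or.inr (Or.inr (Or.inr (hCbefore j hc)))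
      · exact Or.inr (Or.inr (Or.inr (hCbefore j hc)))
    · rcases eq_or_ne b 1 with h0 | h0
      · refine Or.inr (Or.inr (Or.inl ?_))
        intro t' ht'
        by_cases htn : t' < n
        · rw [(suf t' (by omega) htn).2.2]; simp [h0]
        · exact bC t' (by omega)
      · refine Or.inr (Or.inl ⟨?_, ?_⟩)
        · rw [(suf (j+1) (by omega) hj).1]; simp; omega
        · rw [(suf (j+1) (by omega) hj).2.1]; simp; omega
    · rcases eq_or_ne b 1 with h0 | h0
      · refine Or.inr (Or.inr (Or.inr ?_))
        rw [(suf j hc (by omega)).2.2]; simp [h0]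
      · refine Or.inr (Or.inl ⟨?_, ?_⟩)
        · rw [(suf (j+1) (by omega) hj).1]; simp; omega
        · rw [(suf (j+1) (by omega) hj).2.1]; simp; omega
  · -- ccw1
    intro j hj
    rcases Nat.lt_trichotomy j q with hc | hc | hc
    · refine Or.inl ?_
      intro t' ht'
      exact hCbefore t' (by omega)
    · rcases eq_or_ne b 1 with h0 | h0
      · refine Or.inr (Or.inr (Or.inr ?_))
        rw [(suf (j+1) (by omega) hj).2.2]; simp [h0]
      · refine Or.inr (Or.inr (Or.inl ?_))
        intro t' ht'
        by_cases htn : t' < n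
        · rw [(suf t' (by omega) htn).2.1]; simp; omega
        · exact bB t' (by omega)
    · rcases eq_or_ne b 1 with h0 | h0
      · refine Or.inr (Or.inr (Or.inr ?_))
        rw [(suf (j+1) (by omega) hj).2.2]; simp [h0]
      · refine Or.inr (Or.inl ⟨?_, ?_⟩)
        · rw [(suf j hc (by omega)).1]; simp; omega
        · rw [(suf j hc (by omega)).2.1]; simp; omega

lemma fwd3 (bA : ∀ t, n ≤ t → A t = false) (bB : ∀ t, n ≤ t → B t = false)
    (bC : ∀ t, n ≤ t → C t = false) {p q a b : ℕ} (hq : q < n) (hpq : p + 1 < q)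
    (ha : a ≠ 1) (ha3 : a < 3) (hb : b ≠ 1) (hb3 : b < 3)
    (hD : Desc n 3 p q a b A B C) : Bax3 n A B C := by
  have hp : p < n := by omega
  have pre : ∀ j, j < p → (A j = decide ((0:ℕ) = a) ∧ B j = decide ((1:ℕ) = a) ∧ C j = decide ((2:ℕ) = a)) := by
    intro j hj
    have := hD j (by omega)
    have e : ∀ i, colF 3 p q a b j i = decide (i = a) := by
      intro i; simp only [colF]; rw [if_pos hj]
    rw [e 0, e 1, e 2] at this
    exact this
  have atp : A p = true ∧ B p = false ∧ C p = true := by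
    have := hD p hp
    have e : ∀ i, colF 3 p q a b p i = Xset 3 i := by
      intro i; simp only [colF]; rw [if_neg (by omega), if_pos trivial]
    rw [e 0, e 1, e 2] at this
    simpa [Xset] using this
  have mid : ∀ j, p < j → j < q → (A j = false ∧ B j = true ∧ C j = false) := by
    intro j hj hjq
    have := hD j (by omega)
    have e : ∀ i, colF 3 p q a b j i = decide (i = 1) := by
      intro i; simp only [colF]; rw [if_neg (by omega), if_neg (by omega), if_pos hjq]
    rw [e 0, e 1, e 2] at this
    simpa using this
  have atq : A q = false ∨ True := Or.inr trivial
  have atq' : A q = true ∧ B q = false ∧ C q = true := by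
    have := hD q hq
    have e : ∀ i, colF 3 p q a b q i = Yset 3 i := by
      intro i; simp only [colF]; rw [if_neg (by omega), if_neg (by omega), if_neg (by omega), if_pos trivial]
    rw [e 0, e 1, e 2] at this
    simpa [Yset] using this
  have suf : ∀ j, q < j → j < n → (A j = decide ((0:ℕ) = b) ∧ B j = decide ((1:ℕ) = b) ∧ C j = decide ((2:ℕ) = b)) := by
    intro j hj hjn
    have := hD j hjn
    have e : ∀ i, colF 3 p q a b j i = decide (i = b) := by
      intro i; simp only [colF]
      rw [if_neg (by omega), if_neg (by omega), if_neg (by omega), if_neg (by omega)]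
    rw [e 0, e 1, e 2] at this
    exact this
  -- B vanishes up to p
  have hBpre : ∀ t', t' ≤ p → B t' = false := by
    intro t' ht'
    rcases eq_or_lt_of_le ht' with hc | hc
    · rw [hc]; exact atp.2.1
    · rw [(pre t' hc).2.1]; simp; omega
  have hBafter : ∀ t', q ≤ t' → B t' = false := by
    intro t' ht'
    by_cases htn : t' < n
    · rcases eq_or_lt_of_le ht' with hc | hc
      · rw [← hc]; exact atq'.2.1
      · rw [(suf t' hc htn).2.1]; simp; omega
    · exact bB t' (by omega)
  refine ⟨bA, bB, bC, ⟨p, hp, atp.1⟩, ⟨p+1, by omega, (mid (p+1) (by omega) (by omega)).2.1⟩,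
    ⟨p, hp, atp.2.2⟩, ?_, ?_, ?_, ?_, ?_⟩
  · intro j hj
    rcases Nat.lt_trichotomy j p with hc | hc | hc
    · obtain ⟨h1, h2, h3⟩ := pre j hc
      interval_cases a <;> simp_all
    · rw [hc]; exact Or.inl atp.1
    · rcases Nat.lt_trichotomy j q with hc2 | hc2 | hc2
      · exact Or.inr (Or.inl (mid j hc hc2).2.1)
      · rw [hc2]; exact Or.inl atq'.1
      · obtain ⟨h1, h2, h3⟩ := suf j hc2 hj
        interval_cases b <;> simp_all
  · -- cw0
    intro j hj
    rcases Nat.lt_trichotomy j p with hc | hc | hc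
    · rcases eq_or_ne a 0 with h0 | h0
      · refine Or.inr (Or.inr (Or.inr ⟨?_, ?_⟩))
        · rw [(pre j hc).2.1]; simp [h0]
        · rw [(pre j hc).2.2]; simp [h0]
      · refine Or.inl ?_
        intro t' ht'
        rw [(pre t' (by omega)).1]; simp; omega
    · refine Or.inr (Or.inl ?_)
      exact (mid (j+1) (by omega) (by omega)).1
    · by_cases hc2 : j + 1 < q
      · exact Or.inr (Or.inl (mid (j+1) (by omega) hc2).1)
      · refine Or.inr (Or.inr (Or.inl ?_))
        intro t' ht'
        exact hBafter t' (by omega)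
  · -- ccw0
    intro j hj
    rcases Nat.lt_trichotomy j p with hc | hc | hc
    · rcases eq_or_ne a 0 with h0 | h0
      · refine Or.inl ?_
        intro t' ht'
        rw [(pre t' (by omega)).2.1]; simp [h0]
      · refine Or.inr (Or.inl ?_)
        rw [(pre j hc).1]; simp; omega
    · refine Or.inl ?_
      intro t' ht'
      exact hBpre t' (by omega)
    · rcases Nat.lt_trichotomy j q with hc2 | hc2 | hc2
      · exact Or.inr (Or.inl (mid j hc hc2).1)
      · rcases eq_or_ne b 0 with h0 | h0
        · refine Or.inr (Or.inr (Or.inr ⟨?_, ?_⟩))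
          · rw [(suf (j+1) (by omega) hj).2.1]; simp [h0]
          · rw [(suf (j+1) (by omega) hj).2.2]; simp [h0]
        · refine Or.inr (Or.inr (Or.inl ?_))
          intro t' ht'
          by_cases htn : t' < n
          · rw [(suf t' (by omega) htn).1]; simp; omega
          · exact bA t' (by omega)
      · rcases eq_or_ne b 0 with h0 | h0
        · refine Or.inr (Or.inr (Or.inr ⟨?_, ?_⟩))
          · rw [(suf (j+1) (by omega) hj).2.1]; simp [h0]
          · rw [(suf (j+1) (by omega) hj).2.2]; simp [h0]
        · refine Or.inr (Or.inl ?_)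
          rw [(suf j hc2 (by omega)).1]; simp; omega
  · -- cw1
    intro j hj
    rcases Nat.lt_trichotomy j p with hc | hc | hc
    · refine Or.inl ?_
      intro t' ht'
      exact hBpre t' (by omega)
    · refine Or.inl ?_
      intro t' ht'
      exact hBpre t' (by omega)
    · rcases Nat.lt_trichotomy j q with hc2 | hc2 | hc2
      · exact Or.inr (Or.inr (Or.inr (mid j hc hc2).2.2))
      · rcases eq_or_ne b 0 with h0 | h0
        · refine Or.inr (Or.inr (Or.inl ?_))
          intro t' ht'
          by_cases htn : t' < n
          · rw [(suf t' (by omega) htn).2.2]; simp [h0]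
          · exact bC t' (by omega)
        · refine Or.inr (Or.inl ⟨?_, ?_⟩)
          · rw [(suf (j+1) (by omega) hj).1]; simp; omega
          · rw [(suf (j+1) (by omega) hj).2.1]; simp; omega
      · rcases eq_or_ne b 0 with h0 | h0
        · refine Or.inr (Or.inr (Or.inr ?_))
          rw [(suf j hc2 (by omega)).2.2]; simp [h0]
        · refine Or.inr (Or.inl ⟨?_, ?_⟩)
          · rw [(suf (j+1) (by omega) hj).1]; simp; omega
          · rw [(suf (j+1) (by omega) hj).2.1]; simp; omega
  · -- ccw1
    intro j hj
    rcases Nat.lt_trichotomy j p with hc | hc | hc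
    · rcases eq_or_ne a 0 with h0 | h0
      · refine Or.inl ?_
        intro t' ht'
        rw [(pre t' (by omega)).2.2]; simp [h0]
      · refine Or.inr (Or.inl ⟨?_, ?_⟩)
        · rw [(pre j hc).1]; simp; omega
        · rw [(pre j hc).2.1]; simp; omega
    · refine Or.inr (Or.inr (Or.inr ?_))
      exact (mid (j+1) (by omega) (by omega)).2.2
    · by_cases hc2 : j + 1 < q
      · exact Or.inr (Or.inr (Or.inr (mid (j+1) (by omega) hc2).2.2))
      · refine Or.inr (Or.inr (Or.inl ?_))
        intro t' ht'
        exact hBafter t' (by omega)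
lemma Bax3.flip (h : Bax3 n A B C) : Bax3 n C B A := by
  refine ⟨h.bndC, h.bndB, h.bndA, h.rowC, h.rowB, h.rowA, ?_, ?_, ?_, ?_, ?_⟩
  · intro j hj; rcases h.colne j hj with x | x | x <;> tauto
  · intro j hj; rcases h.ccw1 j hj with x | x | x | x <;> tauto
  · intro j hj; rcases h.cw1 j hj with x | x | x | x <;> tauto
  · intro j hj; rcases h.ccw0 j hj with x | x | x | x <;> tauto
  · intro j hj; rcases h.cw0 j hj with x | x | x | x <;> tauto

lemma colF_flip2 {p q a b : ℕ} (ha1 : 1 ≤ a) (ha2 : a ≤ 2) (hb : b ≤ 1) (j i : ℕ) (hi : i ≤ 2) :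
    colF 2 p q a b j i = colF 1 p q (2-a) (2-b) j (2-i) := by
  simp only [colF]
  split_ifs
  · interval_cases i <;> interval_cases a <;> simp
  · interval_cases i <;> simp [Xset]
  · interval_cases i <;> simp
  · interval_cases i <;> simp [Yset]
  · interval_cases i <;> interval_cases b <;> simp

lemma fwd2 (bA : ∀ t, n ≤ t → A t = false) (bB : ∀ t, n ≤ t → B t = false)
    (bC : ∀ t, n ≤ t → C t = false) {p q a b : ℕ} (hq : q < n) (hpq : p < q)
    (ha1 : 1 ≤ a) (ha3 : a < 3) (hb : b ≤ 1)
    (hD : Desc n 2 p q a b A B C) : Bax3 n A B C := by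
  have hD' : Desc n 1 p q (2-a) (2-b) C B A := by
    intro j hj
    obtain ⟨h1, h2, h3⟩ := hD j hj
    refine ⟨?_, ?_, ?_⟩
    · rw [h3, colF_flip2 ha1 (by omega) hb j 2 (by norm_num)]
    · rw [h2, colF_flip2 ha1 (by omega) hb j 1 (by norm_num)]
    · rw [h1, colF_flip2 ha1 (by omega) hb j 0 (by norm_num)]
  exact (fwd1 bC bB bA hq hpq (by omega) (by omega) (by omega) hD').flip

lemma sum_wt {t p q a b : ℕ} (hq : q < n) (hpq0 : t = 0 → p = q) (hpq1 : t ≠ 0 → p < q)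
    (ht : t ≤ 3) (ha3 : a < 3) (hb3 : b < 3) (hD : Desc n t p q a b A B C) :
    ∑ j ∈ Finset.range n, wt A B C j = n + 2 := by
  by_cases ht0 : t = 0
  · subst ht0
    have hpq := hpq0 rfl
    subst hpq
    have hwt : ∀ j, j < n → wt A B C j = 1 + (if j = p then 2 else 0) := by
      intro j hj
      obtain ⟨h1, h2, h3⟩ := hD j hj
      rcases Nat.lt_trichotomy j p with hc | hc | hc
      · have e : ∀ i, colF 0 p p a b j i = decide (i = a) := by
          intro i; simp only [colF]; rw [if_pos hc]
        rw [wt, h1, h2, h3, e 0, e 1, e 2, if_neg (by omega)]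
        interval_cases a <;> simp
      · have e : ∀ i, colF 0 p p a b j i = true := by
          intro i; simp only [colF]; rw [if_neg (by omega), if_pos hc]; simp [Xset]
        rw [wt, h1, h2, h3, e 0, e 1, e 2, if_pos hc]
        rfl
      · have e : ∀ i, colF 0 p p a b j i = decide (i = b) := by
          intro i; simp only [colF]
          rw [if_neg (by omega), if_neg (by omega), if_neg (by omega), if_neg (by omega)]
        rw [wt, h1, h2, h3, e 0, e 1, e 2, if_neg (by omega)]
        interval_cases b <;> simp
    rw [Finset.sum_congr rfl (fun j hj => hwt j (Finset.mem_range.mp hj)),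
      Finset.sum_add_distrib]
    rw [Finset.sum_ite_eq' (Finset.range n) p (fun _ => 2)]
    simp [Finset.mem_range.mpr hq] <;> omega
  · have hpq := hpq1 ht0
    have hwt : ∀ j, j < n → wt A B C j = 1 + (if j = p then 1 else 0) + (if j = q then 1 else 0) := by
      intro j hj
      obtain ⟨h1, h2, h3⟩ := hD j hj
      rcases Nat.lt_trichotomy j p with hc | hc | hc
      · have e : ∀ i, colF t p q a b j i = decide (i = a) := by
          intro i; simp only [colF]; rw [if_pos hc]
        rw [wt, h1, h2, h3, e 0, e 1, e 2, if_neg (by omega), if_neg (by omega)]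
        interval_cases a <;> simp
      · have e : ∀ i, colF t p q a b j i = Xset t i := by
          intro i; simp only [colF]; rw [if_neg (by omega), if_pos hc]
        rw [wt, h1, h2, h3, e 0, e 1, e 2, if_pos hc, if_neg (by omega)]
        interval_cases t <;> simp_all [Xset]
      · rcases Nat.lt_trichotomy j q with hc2 | hc2 | hc2
        · have e : ∀ i, colF t p q a b j i = decide (i = 1) := by
            intro i; simp only [colF]; rw [if_neg (by omega), if_neg (by omega), if_pos hc2]
          rw [wt, h1, h2, h3, e 0, e 1, e 2, if_neg (by omega), if_neg (by omega)]
          simp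
        · have e : ∀ i, colF t p q a b j i = Yset t i := by
            intro i; simp only [colF]
            rw [if_neg (by omega), if_neg (by omega), if_neg (by omega), if_pos hc2]
          rw [wt, h1, h2, h3, e 0, e 1, e 2, if_neg (by omega), if_pos hc2]
          interval_cases t <;> simp_all [Yset]
        · have e : ∀ i, colF t p q a b j i = decide (i = b) := by
            intro i; simp only [colF]
            rw [if_neg (by omega), if_neg (by omega), if_neg (by omega), if_neg (by omega)]
          rw [wt, h1, h2, h3, e 0, e 1, e 2, if_neg (by omega), if_neg (by omega)]
          interval_cases b <;> simp
    rw [Finset.sum_congr rfl (fun j hj => hwt j (Finset.mem_range.mp hj)),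
      Finset.sum_add_distrib, Finset.sum_add_distrib]
    rw [Finset.sum_ite_eq' (Finset.range n) p (fun _ => 1),
      Finset.sum_ite_eq' (Finset.range n) q (fun _ => 1)]
    simp [Finset.mem_range.mpr hq, Finset.mem_range.mpr (show p < n by omega)] <;> omega

theorem forward (bA : ∀ t, n ≤ t → A t = false) (bB : ∀ t, n ≤ t → B t = false)
    (bC : ∀ t, n ≤ t → C t = false) {t p q a b : ℕ} (hP : POK n t p q a b)
    (hD : Desc n t p q a b A B C) :
    Bax3 n A B C ∧ ∑ j ∈ Finset.range n, wt A B C j = n + 2 := by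
  obtain ⟨hq, ha3, hb3, hshape, _, _⟩ := hP
  rcases hshape with ⟨ht, hpq⟩ | ⟨ht, hpq, ha, hb⟩ | ⟨ht, hpq, ha, hb⟩ | ⟨ht, hpq, ha, hb⟩ <;> subst ht
  · exact ⟨fwd0 bA bB bC hq ha3 hb3 hpq hD,
      sum_wt hq (fun _ => hpq) (fun h => absurd rfl h) (by norm_num) ha3 hb3 hD⟩
  · exact ⟨fwd1 bA bB bC hq hpq ha hb hb3 hD,
      sum_wt hq (by omega) (fun _ => hpq) (by norm_num) ha3 hb3 hD⟩
  · exact ⟨fwd2 bA bB bC hq hpq ha ha3 hb hD,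
      sum_wt hq (by omega) (fun _ => hpq) (by norm_num) ha3 hb3 hD⟩
  · exact ⟨fwd3 bA bB bC hq (by omega) ha ha3 hb hb3 hD,
      sum_wt hq (by omega) (fun _ => by omega) (by norm_num) ha3 hb3 hD⟩
/-! ### Bridge to Fin matrices -/

def enc (n t p q a b : ℕ) : Fin 3 → Fin n → Bool := fun i j => colF t p q a b (j : ℕ) (i : ℕ)

lemma rowOf_enc (n t p q a b : ℕ) (i : Fin 3) (j : ℕ) (hj : j < n) :
    rowOf n (enc n t p q a b) i j = colF t p q a b j (i : ℕ) := by
  rw [rowOf_lt _ i j hj]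
  rfl

lemma desc_enc (n t p q a b : ℕ) :
    Desc n t p q a b (rowOf n (enc n t p q a b) 0) (rowOf n (enc n t p q a b) 1)
      (rowOf n (enc n t p q a b) 2) := by
  intro j hj
  rw [rowOf_enc n t p q a b 0 j hj, rowOf_enc n t p q a b 1 j hj, rowOf_enc n t p q a b 2 j hj]
  exact ⟨rfl, rfl, rfl⟩

theorem main_iff {n : ℕ} (M : Fin 3 → Fin n → Bool) :
    (IsBaxter 3 n M ∧ onesCount 3 n M = n + 2) ↔
      ∃ t p q a b, POK n t p q a b ∧ M = enc n t p q a b := by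
  constructor
  · rintro ⟨hbax, hones⟩
    have hb3 := (isBaxter_iff_bax3 M).mp hbax
    have hsum : ∑ j ∈ Finset.range n, wt (rowOf n M 0) (rowOf n M 1) (rowOf n M 2) j = n + 2 := by
      rw [← hones, onesCount_eq_sum]
      rfl
    obtain ⟨t, p, q, a, b, hPOK, hdesc⟩ := backward hb3 hsum
    refine ⟨t, p, q, a, b, hPOK, ?_⟩
    funext i j
    have hj : (j : ℕ) < n := j.isLt
    have := hdesc (j : ℕ) hj
    have hM : ∀ i' : Fin 3, rowOf n M i' (j : ℕ) = M i' j := by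
      intro i'
      rw [rowOf_lt M i' (j : ℕ) hj, Fin.eta]
    rcases fin3cases i with h | h | h <;> subst h
    · rw [show enc n t p q a b 0 j = colF t p q a b (j:ℕ) 0 from rfl, ← this.1, hM 0]
    · rw [show enc n t p q a b 1 j = colF t p q a b (j:ℕ) 1 from rfl, ← this.2.1, hM 1]
    · rw [show enc n t p q a b 2 j = colF t p q a b (j:ℕ) 2 from rfl, ← this.2.2, hM 2]
  · rintro ⟨t, p, q, a, b, hPOK, rfl⟩
    have bnd : ∀ i : Fin 3, ∀ t', n ≤ t' → rowOf n (enc n t p q a b) i t' = false := by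
      intro i t' ht'
      simp [rowOf]
      omega
    obtain ⟨hbax3, hsum⟩ := forward (bnd 0) (bnd 1) (bnd 2) hPOK (desc_enc n t p q a b)
    refine ⟨(isBaxter_iff_bax3 _).mpr hbax3, ?_⟩
    rw [onesCount_eq_sum]
    exact hsum

/-! ### Injectivity -/

lemma colF_lt_p {t p q a b j i : ℕ} (h : j < p) : colF t p q a b j i = decide (i = a) := by
  simp only [colF]; rw [if_pos h]

lemma colF_at_p {t p q a b i : ℕ} : colF t p q a b p i = Xset t i := by
  simp only [colF]; rw [if_neg (by omega), if_pos trivial]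

lemma colF_mid {t p q a b j i : ℕ} (h1 : p < j) (h2 : j < q) :
    colF t p q a b j i = decide (i = 1) := by
  simp only [colF]; rw [if_neg (by omega), if_neg (by omega), if_pos h2]

lemma colF_at_q {t p q a b i : ℕ} (h : p < q) : colF t p q a b q i = Yset t i := by
  simp only [colF]; rw [if_neg (by omega), if_neg (by omega), if_neg (by omega), if_pos trivial]

lemma colF_gt_q {t p q a b j i : ℕ} (hpq : p ≤ q) (h : q < j) :
    colF t p q a b j i = decide (i = b) := by
  simp only [colF]
  rw [if_neg (by omega), if_neg (by omega), if_neg (by omega), if_neg (by omega)]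

/-- A column of "singleton type" cannot match a special column. -/
lemma sing_ne_X {t c : ℕ} (ht : t ≤ 3) (h : ∀ i, i < 3 → Xset t i = decide (i = c)) : False := by
  interval_cases t
  · have h0 := h 0 (by norm_num)
    have h1 := h 1 (by norm_num)
    simp [Xset] at h0 h1
    omega
  · have h0 := h 0 (by norm_num)
    have h1 := h 1 (by norm_num)
    simp [Xset] at h0 h1
    omega
  · have h0 := h 1 (by norm_num)
    have h1 := h 2 (by norm_num)
    simp [Xset] at h0 h1
    omega
  · have h0 := h 0 (by norm_num)
    have h1 := h 2 (by norm_num)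
    simp [Xset] at h0 h1
    omega

lemma sing_ne_Y {t c : ℕ} (ht : t ≤ 3) (h : ∀ i, i < 3 → Yset t i = decide (i = c)) : False := by
  interval_cases t
  · have h0 := h 0 (by norm_num)
    have h1 := h 1 (by norm_num)
    simp [Yset] at h0 h1
    omega
  · have h0 := h 1 (by norm_num)
    have h1 := h 2 (by norm_num)
    simp [Yset] at h0 h1
    omega
  · have h0 := h 0 (by norm_num)
    have h1 := h 1 (by norm_num)
    simp [Yset] at h0 h1
    omega
  · have h0 := h 0 (by norm_num)
    have h1 := h 2 (by norm_num)
    simp [Yset] at h0 h1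
    omega

/-- Columns of the second matrix away from its special positions are singleton type. -/
lemma colF_sing_type {t p q a b j : ℕ} (hpq : p ≤ q) (hj : j ≠ p) (hj' : j ≠ q) :
    ∃ c, ∀ i, colF t p q a b j i = decide (i = c) := by
  rcases Nat.lt_trichotomy j p with hc | hc | hc
  · exact ⟨a, fun i => colF_lt_p hc⟩
  · exact absurd hc hj
  · rcases Nat.lt_trichotomy j q with hc2 | hc2 | hc2
    · exact ⟨1, fun i => colF_mid hc hc2⟩
    · exact absurd hc2 hj'
    · exact ⟨b, fun i => colF_gt_q hpq hc2⟩

lemma POK_p_le_q {n t p q a b : ℕ} (h : POK n t p q a b) : p ≤ q := by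
  obtain ⟨_, _, _, hs, _, _⟩ := h
  rcases hs with ⟨_, h⟩ | ⟨_, h, _⟩ | ⟨_, h, _⟩ | ⟨_, h, _⟩ <;> omega

lemma POK_t_le {n t p q a b : ℕ} (h : POK n t p q a b) : t ≤ 3 := by
  obtain ⟨_, _, _, hs, _, _⟩ := h
  rcases hs with ⟨h, _⟩ | ⟨h, _⟩ | ⟨h, _⟩ | ⟨h, _⟩ <;> omega

theorem enc_inj {n : ℕ} (hn : 1 ≤ n) {t p q a b t' p' q' a' b' : ℕ}
    (h1 : POK n t p q a b) (h2 : POK n t' p' q' a' b')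
    (heq : enc n t p q a b = enc n t' p' q' a' b') :
    t = t' ∧ p = p' ∧ q = q' ∧ a = a' ∧ b = b' := by
  obtain ⟨hq1, ha31, hb31, hs1, hc1, hd1⟩ := h1
  obtain ⟨hq2, ha32, hb32, hs2, hc2, hd2⟩ := h2
  have hpq1 : p ≤ q := POK_p_le_q ⟨hq1, ha31, hb31, hs1, hc1, hd1⟩
  have hpq2 : p' ≤ q' := POK_p_le_q ⟨hq2, ha32, hb32, hs2, hc2, hd2⟩
  have ht1 : t ≤ 3 := POK_t_le ⟨hq1, ha31, hb31, hs1, hc1, hd1⟩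
  have ht2 : t' ≤ 3 := POK_t_le ⟨hq2, ha32, hb32, hs2, hc2, hd2⟩
  have hcols : ∀ j, j < n → ∀ i, i < 3 →
      colF t p q a b j i = colF t' p' q' a' b' j i := by
    intro j hj i hi
    have := congrFun (congrFun heq ⟨i, hi⟩) ⟨j, hj⟩
    exact this
  -- p = p'
  have hpp : p = p' := by
    by_contra hne
    rcases Nat.lt_or_ge p p' with hlt | hge
    · -- column p of second matrix is singleton type, of first is Xset
      obtain ⟨c, hc⟩ := colF_sing_type (t := t') (a := a') (b := b') (j := p) hpq2
        (by omega) (by omega)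
      apply sing_ne_X (t := t) (c := c) ht1
      intro i hi
      rw [← colF_at_p (t := t) (p := p) (q := q) (a := a) (b := b) (i := i), hcols p (by omega) i hi, hc i]
    · have hlt : p' < p := by omega
      obtain ⟨c, hc⟩ := colF_sing_type (t := t) (a := a) (b := b) (j := p') hpq1
        (by omega) (by omega)
      apply sing_ne_X (t := t') (c := c) ht2
      intro i hi
      rw [← colF_at_p (t := t') (p := p') (q := q') (a := a') (b := b') (i := i),
        ← hcols p' (by omega) i hi, hc i]
  -- q = q'
  have hqq : q = q' := by
    by_contra hne
    rcases Nat.lt_or_ge q q' with hlt | hge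
    · obtain ⟨c, hc⟩ := colF_sing_type (t := t) (a := a) (b := b) (j := q') hpq1
        (by omega) (by omega)
      apply sing_ne_Y (t := t') (c := c) ht2
      intro i hi
      have hq'p' : p' < q' := by omega
      rw [← colF_at_q (t := t') (p := p') (q := q') (a := a') (b := b') (i := i) hq'p',
        ← hcols q' (by omega) i hi, hc i]
    · have hlt : q' < q := by omega
      obtain ⟨c, hc⟩ := colF_sing_type (t := t') (a := a') (b := b') (j := q) hpq2
        (by omega) (by omega)
      apply sing_ne_Y (t := t) (c := c) ht1
      intro i hi
      have hqp : p < q := by omega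
      rw [← colF_at_q (t := t) (p := p) (q := q) (a := a) (b := b) (i := i) hqp,
        hcols q (by omega) i hi, hc i]
  subst hpp; subst hqq
  -- t = t'
  have hXeq : ∀ i, i < 3 → Xset t i = Xset t' i := by
    intro i hi
    rw [← colF_at_p (t := t) (p := p) (q := q) (a := a) (b := b) (i := i),
      ← colF_at_p (t := t') (p := p) (q := q) (a := a') (b := b') (i := i)]
    exact hcols p (by omega) i hi
  have htt : t = t' := by
    have e0 := hXeq 0 (by norm_num)
    have e1 := hXeq 1 (by norm_num)
    have e2 := hXeq 2 (by norm_num)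
    -- shapes force p = q iff tag 0
    rcases hs1 with ⟨h, hx⟩ | ⟨h, hx, _⟩ | ⟨h, hx, _⟩ | ⟨h, hx, _⟩ <;>
      rcases hs2 with ⟨h', hx'⟩ | ⟨h', hx', _⟩ | ⟨h', hx', _⟩ | ⟨h', hx', _⟩ <;>
      subst h <;> subst h' <;> first
        | rfl
        | omega
        | (simp [Xset] at e0 e1 e2)
  subst htt
  -- a = a'
  have haa : a = a' := by
    by_cases hp0 : p = 0
    · rw [hc1 hp0, hc2 hp0]
    · have h0 : (0:ℕ) < n := by omega
      have := hcols 0 h0 a (by omega)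
      rw [colF_lt_p (by omega), colF_lt_p (by omega)] at this
      simp at this
      omega
  -- b = b'
  have hbb : b = b' := by
    by_cases hqn : q = n - 1
    · rw [hd1 hqn, hd2 hqn]
    · have hq' : q < n - 1 := by omega
      have := hcols (n-1) (by omega) b (by omega)
      rw [colF_gt_q hpq1 (by omega), colF_gt_q hpq1 (by omega)] at this
      simp at this
      omega
  exact ⟨rfl, rfl, rfl, haa, hbb⟩
/-! ### Counting -/

instance POK.dec (n t p q a b : ℕ) : Decidable (POK n t p q a b) := by
  unfold POK
  infer_instance

def PFin (n : ℕ) : Finset (ℕ × ℕ × ℕ × ℕ × ℕ) :=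
  ((Finset.range 4) ×ˢ (Finset.range n) ×ˢ (Finset.range n) ×ˢ (Finset.range 3) ×ˢ
    (Finset.range 3)).filter (fun x => POK n x.1 x.2.1 x.2.2.1 x.2.2.2.1 x.2.2.2.2)

lemma POK0_iff {n p q a b : ℕ} (hq : q < n) :
    POK n 0 p q a b ↔ (a < 3 ∧ b < 3 ∧ p = q ∧ (p = 0 → a = 0) ∧ (q = n - 1 → b = 0)) := by
  unfold POK adef bdef
  constructor
  · rintro ⟨_, ha, hb, hs, hc, hd⟩
    rcases hs with ⟨_, h⟩ | ⟨h, _⟩ | ⟨h, _⟩ | ⟨h, _⟩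
    · exact ⟨ha, hb, h, by simpa using hc, by simpa using hd⟩
    · omega
    · omega
    · omega
  · rintro ⟨ha, hb, hpq, hc, hd⟩
    exact ⟨hq, ha, hb, Or.inl ⟨rfl, hpq⟩, by simpa using hc, by simpa using hd⟩

lemma POK1_iff {n p q a b : ℕ} (hq : q < n) :
    POK n 1 p q a b ↔ (b < 3 ∧ p < q ∧ a ≤ 1 ∧ 1 ≤ b ∧ (p = 0 → a = 0) ∧ (q = n - 1 → b = 1)) := by
  unfold POK adef bdef
  constructor
  · rintro ⟨_, ha, hb, hs, hc, hd⟩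
    rcases hs with ⟨h, _⟩ | ⟨_, h1, h2, h3⟩ | ⟨h, _⟩ | ⟨h, _⟩
    · omega
    · exact ⟨hb, h1, h2, h3, by simpa using hc, by simpa using hd⟩
    · omega
    · omega
  · rintro ⟨hb, hpq, ha, hb1, hc, hd⟩
    exact ⟨hq, by omega, hb, Or.inr (Or.inl ⟨rfl, hpq, ha, hb1⟩), by simpa using hc,
      by simpa using hd⟩

lemma POK2_iff {n p q a b : ℕ} (hq : q < n) :
    POK n 2 p q a b ↔ (a < 3 ∧ p < q ∧ 1 ≤ a ∧ b ≤ 1 ∧ (p = 0 → a = 1) ∧ (q = n - 1 → b = 0)) := by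
  unfold POK adef bdef
  constructor
  · rintro ⟨_, ha, hb, hs, hc, hd⟩
    rcases hs with ⟨h, _⟩ | ⟨h, _⟩ | ⟨_, h1, h2, h3⟩ | ⟨h, _⟩
    · omega
    · omega
    · exact ⟨ha, h1, h2, h3, by simpa using hc, by simpa using hd⟩
    · omega
  · rintro ⟨ha, hpq, ha1, hb1, hc, hd⟩
    exact ⟨hq, ha, by omega, Or.inr (Or.inr (Or.inl ⟨rfl, hpq, ha1, hb1⟩)), by simpa using hc,
      by simpa using hd⟩

lemma POK3_iff {n p q a b : ℕ} (hq : q < n) :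
    POK n 3 p q a b ↔ (a < 3 ∧ b < 3 ∧ p + 2 ≤ q ∧ a ≠ 1 ∧ b ≠ 1 ∧ (p = 0 → a = 0) ∧
      (q = n - 1 → b = 0)) := by
  unfold POK adef bdef
  constructor
  · rintro ⟨_, ha, hb, hs, hc, hd⟩
    rcases hs with ⟨h, _⟩ | ⟨h, _⟩ | ⟨h, _⟩ | ⟨_, h1, h2, h3⟩
    · omega
    · omega
    · omega
    · exact ⟨ha, hb, by omega, h2, h3, by simpa using hc, by simpa using hd⟩
  · rintro ⟨ha, hb, hpq, ha1, hb1, hc, hd⟩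
    exact ⟨hq, ha, hb, Or.inr (Or.inr (Or.inr ⟨rfl, by omega, ha1, hb1⟩)), by simpa using hc,
      by simpa using hd⟩

lemma inner0 {n p q : ℕ} (hn : 2 ≤ n) (hq : q < n) :
    (∑ a ∈ Finset.range 3, ∑ b ∈ Finset.range 3, if POK n 0 p q a b then (1:ℕ) else 0)
      = if p = q then (if p = 0 then 1 else 3) * (if q = n - 1 then 1 else 3) else 0 := by
  have e : ∀ a b, (if POK n 0 p q a b then (1:ℕ) else 0)
      = if (a < 3 ∧ b < 3 ∧ p = q ∧ (p = 0 → a = 0) ∧ (q = n - 1 → b = 0)) then 1 else 0 := by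
    intro a b
    exact if_congr (POK0_iff hq) rfl rfl
  simp only [e]
  by_cases h1 : p = q
  · subst h1
    by_cases h2 : p = 0
    · subst h2
      simp [Finset.sum_range_succ, show ¬((0:ℕ) = n - 1) from by omega] <;> first | decide | omega
    · by_cases h3 : p = n - 1
      · subst h3
        simp [Finset.sum_range_succ, h2, show ¬(n - 1 = 0) from by omega] <;> first | decide | omega
      · simp [Finset.sum_range_succ, h2, h3] <;> first | decide | omega
  · simp [Finset.sum_range_succ, h1]

lemma inner1 {n p q : ℕ} (hn : 2 ≤ n) (hq : q < n) :
    (∑ a ∈ Finset.range 3, ∑ b ∈ Finset.range 3, if POK n 1 p q a b then (1:ℕ) else 0)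
      = if p < q then (if p = 0 then 1 else 2) * (if q = n - 1 then 1 else 2) else 0 := by
  have e : ∀ a b, (if POK n 1 p q a b then (1:ℕ) else 0)
      = if (b < 3 ∧ p < q ∧ a ≤ 1 ∧ 1 ≤ b ∧ (p = 0 → a = 0) ∧ (q = n - 1 → b = 1)) then 1 else 0 := by
    intro a b
    exact if_congr (POK1_iff hq) rfl rfl
  simp only [e]
  by_cases h1 : p < q
  · by_cases h2 : p = 0
    · subst h2
      by_cases h3 : q = n - 1
      · subst h3
        simp [Finset.sum_range_succ, h1] <;> first | decide | omega
      · simp [Finset.sum_range_succ, h1, h3] <;> first | decide | omega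
    · by_cases h3 : q = n - 1
      · subst h3
        simp [Finset.sum_range_succ, h1, h2] <;> first | decide | omega
      · simp [Finset.sum_range_succ, h1, h2, h3] <;> first | decide | omega
  · simp [Finset.sum_range_succ, h1]

lemma inner2 {n p q : ℕ} (hn : 2 ≤ n) (hq : q < n) :
    (∑ a ∈ Finset.range 3, ∑ b ∈ Finset.range 3, if POK n 2 p q a b then (1:ℕ) else 0)
      = if p < q then (if p = 0 then 1 else 2) * (if q = n - 1 then 1 else 2) else 0 := by
  have e : ∀ a b, (if POK n 2 p q a b then (1:ℕ) else 0)
      = if (a < 3 ∧ p < q ∧ 1 ≤ a ∧ b ≤ 1 ∧ (p = 0 → a = 1) ∧ (q = n - 1 → b = 0)) then 1 else 0 := by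
    intro a b
    exact if_congr (POK2_iff hq) rfl rfl
  simp only [e]
  by_cases h1 : p < q
  · by_cases h2 : p = 0
    · subst h2
      by_cases h3 : q = n - 1
      · subst h3
        simp [Finset.sum_range_succ, h1] <;> first | decide | omega
      · simp [Finset.sum_range_succ, h1, h3] <;> first | decide | omega
    · by_cases h3 : q = n - 1
      · subst h3
        simp [Finset.sum_range_succ, h1, h2] <;> first | decide | omega
      · simp [Finset.sum_range_succ, h1, h2, h3] <;> first | decide | omega
  · simp [Finset.sum_range_succ, h1]

lemma inner3 {n p q : ℕ} (hn : 2 ≤ n) (hq : q < n) :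
    (∑ a ∈ Finset.range 3, ∑ b ∈ Finset.range 3, if POK n 3 p q a b then (1:ℕ) else 0)
      = if p + 2 ≤ q then (if p = 0 then 1 else 2) * (if q = n - 1 then 1 else 2) else 0 := by
  have e : ∀ a b, (if POK n 3 p q a b then (1:ℕ) else 0)
      = if (a < 3 ∧ b < 3 ∧ p + 2 ≤ q ∧ a ≠ 1 ∧ b ≠ 1 ∧ (p = 0 → a = 0) ∧ (q = n - 1 → b = 0))
          then 1 else 0 := by
    intro a b
    exact if_congr (POK3_iff hq) rfl rfl
  simp only [e]
  by_cases h1 : p + 2 ≤ q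
  · by_cases h2 : p = 0
    · subst h2
      by_cases h3 : q = n - 1
      · subst h3
        simp [Finset.sum_range_succ, h1] <;> first | decide | omega
      · simp [Finset.sum_range_succ, h1, h3] <;> first | decide | omega
    · by_cases h3 : q = n - 1
      · subst h3
        simp [Finset.sum_range_succ, h1, h2] <;> first | decide | omega
      · simp [Finset.sum_range_succ, h1, h2, h3] <;> first | decide | omega
  · simp [Finset.sum_range_succ, h1]
/-! ### Outer sums -/

lemma sum_pull {s : Finset ℕ} {P : Prop} [Decidable P] (f : ℕ → ℕ) :
    (∑ q ∈ s, if P then f q else 0) = if P then ∑ q ∈ s, f q else 0 := by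
  by_cases h : P <;> simp [h]

lemma sum_ind_gt (n p c : ℕ) :
    (∑ q ∈ Finset.range n, if p < q then c else 0) = c * (n - (p+1)) := by
  have e : ∀ q : ℕ, (if p < q then c else 0) = c * (if p < q then 1 else 0) := by
    intro q
    by_cases h : p < q <;> simp [h]
  simp only [e]
  rw [← Finset.mul_sum, ← Finset.card_filter]
  have e2 : (Finset.range n).filter (fun q => p < q) = Finset.Ico (p+1) n := by
    ext x
    simp only [Finset.mem_filter, Finset.mem_range, Finset.mem_Ico]
    omega
  rw [e2, Nat.card_Ico]

lemma sum_ind_ge2 (n p c : ℕ) :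
    (∑ q ∈ Finset.range n, if p + 2 ≤ q then c else 0) = c * (n - (p+2)) := by
  have e : ∀ q : ℕ, (if p + 2 ≤ q then c else 0) = c * (if p + 2 ≤ q then 1 else 0) := by
    intro q
    by_cases h : p + 2 ≤ q <;> simp [h]
  simp only [e]
  rw [← Finset.mul_sum, ← Finset.card_filter]
  have e2 : (Finset.range n).filter (fun q => p + 2 ≤ q) = Finset.Ico (p+2) n := by
    ext x
    simp only [Finset.mem_filter, Finset.mem_range, Finset.mem_Ico]
    omega
  rw [e2, Nat.card_Ico]

lemma sum_ind_ltm (n m c : ℕ) (hm : m ≤ n) :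
    (∑ p ∈ Finset.range n, if p < m then c else 0) = c * m := by
  have e : ∀ p : ℕ, (if p < m then c else 0) = c * (if p < m then 1 else 0) := by
    intro p
    by_cases h : p < m <;> simp [h]
  simp only [e]
  rw [← Finset.mul_sum, ← Finset.card_filter]
  have e2 : (Finset.range n).filter (fun p => p < m) = Finset.range m := by
    ext x
    simp only [Finset.mem_filter, Finset.mem_range]
    omega
  rw [e2, Finset.card_range]

lemma twoT (n : ℕ) :
    (∑ p ∈ Finset.range n, ∑ q ∈ Finset.range n, if p < q then (1:ℕ) else 0) * 2
      = n * (n - 1) := by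
  have e1 : (∑ p ∈ Finset.range n, ∑ q ∈ Finset.range n, if p < q then (1:ℕ) else 0)
      = ∑ p ∈ Finset.range n, (n - 1 - p) := by
    apply Finset.sum_congr rfl
    intro p _
    rw [sum_ind_gt]
    omega
  rw [e1]
  have e2 := Finset.sum_range_reflect (fun i => i) n
  rw [e2, Finset.sum_range_id_mul_two]

lemma twoT' (n : ℕ) (hn : 1 ≤ n) :
    (∑ p ∈ Finset.range n, ∑ q ∈ Finset.range n, if p + 2 ≤ q then (1:ℕ) else 0) * 2
      = (n - 1) * (n - 2) := by
  obtain ⟨m, rfl⟩ : ∃ m, n = m + 1 := ⟨n - 1, by omega⟩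
  have e1 : (∑ p ∈ Finset.range (m+1), ∑ q ∈ Finset.range (m+1), if p + 2 ≤ q then (1:ℕ) else 0)
      = ∑ p ∈ Finset.range (m+1), (m - 1 - p) := by
    apply Finset.sum_congr rfl
    intro p _
    rw [sum_ind_ge2]
    omega
  rw [e1, Finset.sum_range_succ]
  have hz : m - 1 - m = 0 := by omega
  rw [hz, Nat.add_zero]
  have e2' : (∑ p ∈ Finset.range m, (m - 1 - p)) = ∑ p ∈ Finset.range m, p :=
    Finset.sum_range_reflect (fun i => i) m
  rw [e2', Finset.sum_range_id_mul_two]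
  simp

/-- The tag-0 total. -/
lemma sumS0 (n : ℕ) (hn : 2 ≤ n) :
    (∑ p ∈ Finset.range n, ∑ q ∈ Finset.range n,
      if p = q then (if p = 0 then 1 else 3) * (if q = n - 1 then 1 else 3) else 0) + 12
    = 9 * n := by
  have e1 : ∀ p ∈ Finset.range n, (∑ q ∈ Finset.range n,
      if p = q then (if p = 0 then 1 else 3) * (if q = n - 1 then 1 else 3) else 0)
      = (if p = 0 then 1 else 3) * (if p = n - 1 then 1 else 3) := by
    intro p hp
    rw [Finset.sum_ite_eq (Finset.range n) p
      (fun q => (if p = 0 then 1 else 3) * (if q = n - 1 then 1 else 3)), if_pos hp]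
  rw [Finset.sum_congr rfl e1]
  have key : ∀ p ∈ Finset.range n,
      (if p = 0 then 1 else 3) * (if p = n - 1 then 1 else 3)
        + ((if p = 0 then 6 else 0) + (if p = n - 1 then 6 else 0)) = 9 := by
    intro p hp
    simp only [Finset.mem_range] at hp
    by_cases h1 : p = 0 <;> by_cases h2 : p = n - 1
    · omega
    · simp [h1, h2, show ¬((0:ℕ) = n - 1) from by omega]
    · simp [h1, h2, show ¬(n - 1 = 0) from by omega]
    · simp [h1, h2]
  have h2 := Finset.sum_congr rfl key
  rw [Finset.sum_add_distrib, Finset.sum_add_distrib,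
    Finset.sum_ite_eq' (Finset.range n) 0 (fun _ => 6),
    Finset.sum_ite_eq' (Finset.range n) (n-1) (fun _ => 6), Finset.sum_const,
    Finset.card_range] at h2
  simp only [smul_eq_mul] at h2
  rw [if_pos (Finset.mem_range.mpr (show 0 < n by omega)),
    if_pos (Finset.mem_range.mpr (show n - 1 < n by omega))] at h2
  omega

lemma pair_key (n : ℕ) (w : ℕ → ℕ → Prop) [∀ p q, Decidable (w p q)] (p q : ℕ) :
    (if w p q then (if p = 0 then 1 else 2) * (if q = n - 1 then 1 else 2) else 0)
      + ((if w p q ∧ p = 0 then 2 else 0) + (if w p q ∧ q = n - 1 then 2 else 0))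
    = (if w p q then 4 else 0) + (if w p q ∧ p = 0 ∧ q = n - 1 then 1 else 0) := by
  by_cases h1 : w p q
  · simp only [h1, true_and, if_true]
    by_cases h2 : p = 0 <;> by_cases h3 : q = n - 1 <;> simp [h2, h3]
  · simp [h1]

/-- tag 1/2 total: S + 4(n-1) = 4T + 1. -/
lemma sumS1 (n : ℕ) (hn : 2 ≤ n) :
    (∑ p ∈ Finset.range n, ∑ q ∈ Finset.range n,
        if p < q then (if p = 0 then 1 else 2) * (if q = n - 1 then 1 else 2) else 0)
      + 4 * (n - 1)
    = 4 * (∑ p ∈ Finset.range n, ∑ q ∈ Finset.range n, if p < q then (1:ℕ) else 0) + 1 := by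
  have key := fun p q => pair_key n (fun p q => p < q) p q
  have h2 : (∑ p ∈ Finset.range n, ∑ q ∈ Finset.range n,
      ((if p < q then (if p = 0 then 1 else 2) * (if q = n - 1 then 1 else 2) else 0)
        + ((if p < q ∧ p = 0 then 2 else 0) + (if p < q ∧ q = n - 1 then 2 else 0))))
      = (∑ p ∈ Finset.range n, ∑ q ∈ Finset.range n,
      ((if p < q then (4:ℕ) else 0) + (if p < q ∧ p = 0 ∧ q = n - 1 then 1 else 0))) := by
    apply Finset.sum_congr rfl
    intro p _
    apply Finset.sum_congr rfl
    intro q _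
    exact key p q
  simp only [Finset.sum_add_distrib] at h2
  -- evaluate the indicator double sums
  have hB : (∑ p ∈ Finset.range n, ∑ q ∈ Finset.range n, if p < q ∧ p = 0 then (2:ℕ) else 0)
      = 2 * (n - 1) := by
    have e : ∀ p q : ℕ, (if p < q ∧ p = 0 then (2:ℕ) else 0)
        = if p = 0 then (if p < q then 2 else 0) else 0 := by
      intro p q
      by_cases h1' : p < q <;> by_cases h2' : p = 0 <;> simp [h1', h2']
    simp only [e, sum_pull]
    rw [Finset.sum_ite_eq' (Finset.range n) 0
      (fun p => ∑ q ∈ Finset.range n, if p < q then (2:ℕ) else 0),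
      if_pos (Finset.mem_range.mpr (show 0 < n by omega)), sum_ind_gt]
  have hC : (∑ p ∈ Finset.range n, ∑ q ∈ Finset.range n, if p < q ∧ q = n - 1 then (2:ℕ) else 0)
      = 2 * (n - 1) := by
    have e : ∀ p q : ℕ, (if p < q ∧ q = n - 1 then (2:ℕ) else 0)
        = if q = n - 1 then (if p < q then 2 else 0) else 0 := by
      intro p q
      by_cases h1' : p < q <;> by_cases h2' : q = n - 1 <;> simp [h1', h2']
    simp only [e]
    have e2 : ∀ p : ℕ, (∑ q ∈ Finset.range n, if q = n - 1 then (if p < q then (2:ℕ) else 0) else 0)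
        = if p < n - 1 then 2 else 0 := by
      intro p
      rw [Finset.sum_ite_eq' (Finset.range n) (n-1) (fun q => if p < q then (2:ℕ) else 0),
        if_pos (Finset.mem_range.mpr (show n - 1 < n by omega))]
    simp only [e2]
    rw [sum_ind_ltm n (n-1) 2 (by omega)]
  have hD : (∑ p ∈ Finset.range n, ∑ q ∈ Finset.range n,
      if p < q ∧ p = 0 ∧ q = n - 1 then (1:ℕ) else 0) = 1 := by
    have e : ∀ p q : ℕ, (if p < q ∧ p = 0 ∧ q = n - 1 then (1:ℕ) else 0)
        = if p = 0 then (if q = n - 1 then (if p < q then 1 else 0) else 0) else 0 := by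
      intro p q
      by_cases h1' : p < q <;> by_cases h2' : p = 0 <;> by_cases h3' : q = n - 1 <;>
        simp [h1', h2', h3']
    simp only [e, sum_pull]
    rw [Finset.sum_ite_eq' (Finset.range n) 0
      (fun p => ∑ q ∈ Finset.range n, if q = n - 1 then (if p < q then (1:ℕ) else 0) else 0),
      if_pos (Finset.mem_range.mpr (show 0 < n by omega)),
      Finset.sum_ite_eq' (Finset.range n) (n-1) (fun q => if 0 < q then (1:ℕ) else 0),
      if_pos (Finset.mem_range.mpr (show n - 1 < n by omega)),
      if_pos (show 0 < n - 1 by omega)]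
  have h4 : (∑ p ∈ Finset.range n, ∑ q ∈ Finset.range n, if p < q then (4:ℕ) else 0)
      = 4 * (∑ p ∈ Finset.range n, ∑ q ∈ Finset.range n, if p < q then (1:ℕ) else 0) := by
    rw [Finset.mul_sum]
    apply Finset.sum_congr rfl
    intro p _
    rw [Finset.mul_sum]
    apply Finset.sum_congr rfl
    intro q _
    by_cases h : p < q <;> simp [h]
  rw [hB, hC, hD, h4] at h2
  omega

/-- tag 3 total: S + 4(n-2) = 4T' + 1. -/
lemma sumS3 (n : ℕ) (hn : 3 ≤ n) :
    (∑ p ∈ Finset.range n, ∑ q ∈ Finset.range n,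
        if p + 2 ≤ q then (if p = 0 then 1 else 2) * (if q = n - 1 then 1 else 2) else 0)
      + 4 * (n - 2)
    = 4 * (∑ p ∈ Finset.range n, ∑ q ∈ Finset.range n, if p + 2 ≤ q then (1:ℕ) else 0) + 1 := by
  have key := fun p q => pair_key n (fun p q => p + 2 ≤ q) p q
  have h2 : (∑ p ∈ Finset.range n, ∑ q ∈ Finset.range n,
      ((if p + 2 ≤ q then (if p = 0 then 1 else 2) * (if q = n - 1 then 1 else 2) else 0)
        + ((if p + 2 ≤ q ∧ p = 0 then 2 else 0) + (if p + 2 ≤ q ∧ q = n - 1 then 2 else 0))))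
      = (∑ p ∈ Finset.range n, ∑ q ∈ Finset.range n,
      ((if p + 2 ≤ q then (4:ℕ) else 0) + (if p + 2 ≤ q ∧ p = 0 ∧ q = n - 1 then 1 else 0))) := by
    apply Finset.sum_congr rfl
    intro p _
    apply Finset.sum_congr rfl
    intro q _
    exact key p q
  simp only [Finset.sum_add_distrib] at h2
  have hB : (∑ p ∈ Finset.range n, ∑ q ∈ Finset.range n,
      if p + 2 ≤ q ∧ p = 0 then (2:ℕ) else 0) = 2 * (n - 2) := by
    have e : ∀ p q : ℕ, (if p + 2 ≤ q ∧ p = 0 then (2:ℕ) else 0)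
        = if p = 0 then (if p + 2 ≤ q then 2 else 0) else 0 := by
      intro p q
      by_cases h1' : p + 2 ≤ q <;> by_cases h2' : p = 0 <;> simp [h1', h2']
    simp only [e, sum_pull]
    rw [Finset.sum_ite_eq' (Finset.range n) 0
      (fun p => ∑ q ∈ Finset.range n, if p + 2 ≤ q then (2:ℕ) else 0),
      if_pos (Finset.mem_range.mpr (show 0 < n by omega)), sum_ind_ge2]
  have hC : (∑ p ∈ Finset.range n, ∑ q ∈ Finset.range n,
      if p + 2 ≤ q ∧ q = n - 1 then (2:ℕ) else 0) = 2 * (n - 2) := by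
    have e : ∀ p q : ℕ, (if p + 2 ≤ q ∧ q = n - 1 then (2:ℕ) else 0)
        = if q = n - 1 then (if p + 2 ≤ q then 2 else 0) else 0 := by
      intro p q
      by_cases h1' : p + 2 ≤ q <;> by_cases h2' : q = n - 1 <;> simp [h1', h2']
    simp only [e]
    have e2 : ∀ p : ℕ, (∑ q ∈ Finset.range n,
        if q = n - 1 then (if p + 2 ≤ q then (2:ℕ) else 0) else 0)
        = if p < n - 2 then 2 else 0 := by
      intro p
      rw [Finset.sum_ite_eq' (Finset.range n) (n-1) (fun q => if p + 2 ≤ q then (2:ℕ) else 0),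
        if_pos (Finset.mem_range.mpr (show n - 1 < n by omega))]
      by_cases h : p + 2 ≤ n - 1
      · rw [if_pos h, if_pos (by omega)]
      · rw [if_neg h, if_neg (by omega)]
    simp only [e2]
    rw [sum_ind_ltm n (n-2) 2 (by omega)]
  have hD : (∑ p ∈ Finset.range n, ∑ q ∈ Finset.range n,
      if p + 2 ≤ q ∧ p = 0 ∧ q = n - 1 then (1:ℕ) else 0) = 1 := by
    have e : ∀ p q : ℕ, (if p + 2 ≤ q ∧ p = 0 ∧ q = n - 1 then (1:ℕ) else 0)
        = if p = 0 then (if q = n - 1 then (if p + 2 ≤ q then 1 else 0) else 0) else 0 := by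
      intro p q
      by_cases h1' : p + 2 ≤ q <;> by_cases h2' : p = 0 <;> by_cases h3' : q = n - 1 <;>
        simp [h1', h2', h3']
    simp only [e, sum_pull]
    rw [Finset.sum_ite_eq' (Finset.range n) 0
      (fun p => ∑ q ∈ Finset.range n, if q = n - 1 then (if p + 2 ≤ q then (1:ℕ) else 0) else 0),
      if_pos (Finset.mem_range.mpr (show 0 < n by omega)),
      Finset.sum_ite_eq' (Finset.range n) (n-1) (fun q => if 0 + 2 ≤ q then (1:ℕ) else 0),
      if_pos (Finset.mem_range.mpr (show n - 1 < n by omega)),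
      if_pos (show 0 + 2 ≤ n - 1 by omega)]
  have h4 : (∑ p ∈ Finset.range n, ∑ q ∈ Finset.range n, if p + 2 ≤ q then (4:ℕ) else 0)
      = 4 * (∑ p ∈ Finset.range n, ∑ q ∈ Finset.range n, if p + 2 ≤ q then (1:ℕ) else 0) := by
    rw [Finset.mul_sum]
    apply Finset.sum_congr rfl
    intro p _
    rw [Finset.mul_sum]
    apply Finset.sum_congr rfl
    intro q _
    by_cases h : p + 2 ≤ q <;> simp [h]
  rw [hB, hC, hD, h4] at h2
  omega
lemma card_PFin (n : ℕ) (hn : 3 ≤ n) :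
    ((PFin n).card : ℚ) = 6 * (n:ℚ)^2 - 13 * (n:ℚ) + 11 := by
  have hcard : (PFin n).card
      = ∑ t ∈ Finset.range 4, ∑ p ∈ Finset.range n, ∑ q ∈ Finset.range n,
          ∑ a ∈ Finset.range 3, ∑ b ∈ Finset.range 3, if POK n t p q a b then 1 else 0 := by
    rw [PFin, Finset.card_filter]
    simp only [Finset.sum_product]
  rw [hcard]
  rw [show (4:ℕ) = 3 + 1 from rfl, Finset.sum_range_succ,
    show (3:ℕ) = 2 + 1 from rfl, Finset.sum_range_succ,
    show (2:ℕ) = 1 + 1 from rfl, Finset.sum_range_succ,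
    Finset.sum_range_one]
  have e0 : (∑ p ∈ Finset.range n, ∑ q ∈ Finset.range n,
      ∑ a ∈ Finset.range 3, ∑ b ∈ Finset.range 3, if POK n 0 p q a b then 1 else 0)
      = ∑ p ∈ Finset.range n, ∑ q ∈ Finset.range n,
          if p = q then (if p = 0 then 1 else 3) * (if q = n - 1 then 1 else 3) else 0 :=
    Finset.sum_congr rfl fun p _ => Finset.sum_congr rfl fun q hq =>
      inner0 (by omega) (Finset.mem_range.mp hq)
  have e1 : (∑ p ∈ Finset.range n, ∑ q ∈ Finset.range n,
      ∑ a ∈ Finset.range 3, ∑ b ∈ Finset.range 3, if POK n 1 p q a b then 1 else 0)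
      = ∑ p ∈ Finset.range n, ∑ q ∈ Finset.range n,
          if p < q then (if p = 0 then 1 else 2) * (if q = n - 1 then 1 else 2) else 0 :=
    Finset.sum_congr rfl fun p _ => Finset.sum_congr rfl fun q hq =>
      inner1 (by omega) (Finset.mem_range.mp hq)
  have e2 : (∑ p ∈ Finset.range n, ∑ q ∈ Finset.range n,
      ∑ a ∈ Finset.range 3, ∑ b ∈ Finset.range 3, if POK n 2 p q a b then 1 else 0)
      = ∑ p ∈ Finset.range n, ∑ q ∈ Finset.range n,
          if p < q then (if p = 0 then 1 else 2) * (if q = n - 1 then 1 else 2) else 0 :=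
    Finset.sum_congr rfl fun p _ => Finset.sum_congr rfl fun q hq =>
      inner2 (by omega) (Finset.mem_range.mp hq)
  have e3 : (∑ p ∈ Finset.range n, ∑ q ∈ Finset.range n,
      ∑ a ∈ Finset.range 3, ∑ b ∈ Finset.range 3, if POK n 3 p q a b then 1 else 0)
      = ∑ p ∈ Finset.range n, ∑ q ∈ Finset.range n,
          if p + 2 ≤ q then (if p = 0 then 1 else 2) * (if q = n - 1 then 1 else 2) else 0 :=
    Finset.sum_congr rfl fun p _ => Finset.sum_congr rfl fun q hq =>
      inner3 (by omega) (Finset.mem_range.mp hq)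
  rw [e0, e1, e2, e3]
  have E0 := sumS0 n (by omega)
  have E1 := sumS1 n (by omega)
  have E3 := sumS3 n hn
  have ET := twoT n
  have ET' := twoT' n (by omega)
  have c1 : ((n - 1 : ℕ) : ℚ) = (n : ℚ) - 1 := by
    rw [Nat.cast_sub (by omega)]
    simp
  have c2 : ((n - 2 : ℕ) : ℚ) = (n : ℚ) - 2 := by
    rw [Nat.cast_sub (by omega)]
    simp
  have Q0 := congrArg (Nat.cast : ℕ → ℚ) E0
  have Q1 := congrArg (Nat.cast : ℕ → ℚ) E1
  have Q3 := congrArg (Nat.cast : ℕ → ℚ) E3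
  have QT := congrArg (Nat.cast : ℕ → ℚ) ET
  have QT' := congrArg (Nat.cast : ℕ → ℚ) ET'
  push_cast at Q0 Q1 Q3 QT QT' ⊢
  rw [c1] at Q1 QT
  rw [c1, c2] at QT'
  rw [c2] at Q3
  nlinarith [Q0, Q1, Q3, QT, QT']

lemma count_eq (n : ℕ) (hn : 1 ≤ n) :
    Nat.card {M : Fin 3 → Fin n → Bool // IsBaxter 3 n M ∧ onesCount 3 n M = n + 2}
      = (PFin n).card := by
  classical
  rw [Nat.card_eq_fintype_card, Fintype.card_subtype]
  have himg : (Finset.univ.filter (fun M : Fin 3 → Fin n → Bool =>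
      IsBaxter 3 n M ∧ onesCount 3 n M = n + 2))
      = (PFin n).image (fun x : ℕ×ℕ×ℕ×ℕ×ℕ => enc n x.1 x.2.1 x.2.2.1 x.2.2.2.1 x.2.2.2.2) := by
    ext M
    simp only [Finset.mem_filter, Finset.mem_univ, true_and, Finset.mem_image]
    rw [main_iff M]
    constructor
    · rintro ⟨t, p, q, a, b, hP, rfl⟩
      refine ⟨(t, p, q, a, b), ?_, rfl⟩
      have h1 := POK_t_le hP
      have h2 := POK_p_le_q hP
      obtain ⟨hq, ha, hb, _, _, _⟩ := hP
      refine Finset.mem_filter.mpr ⟨?_, ?_⟩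
      · simp only [Finset.mem_product, Finset.mem_range]
        exact ⟨by omega, by omega, by omega, by omega, by omega⟩
      · exact ⟨hq, ha, hb, by assumption, by assumption, by assumption⟩
    · rintro ⟨⟨t, p, q, a, b⟩, hmem, rfl⟩
      exact ⟨t, p, q, a, b, (Finset.mem_filter.mp hmem).2, rfl⟩
  rw [himg, Finset.card_image_of_injOn]
  rintro ⟨t, p, q, a, b⟩ hx ⟨t', p', q', a', b'⟩ hy hxy
  have hPx := (Finset.mem_filter.mp hx).2
  have hPy := (Finset.mem_filter.mp hy).2
  obtain ⟨h1, h2, h3, h4, h5⟩ := enc_inj hn hPx hPy hxy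
  subst h1; subst h2; subst h3; subst h4; subst h5
  rfl

end BX


/-- The number of Baxter matrices with `r` rows and `k` columns. -/
noncomputable def baxterCount (r k : ℕ) : ℕ :=
  Nat.card {M : Fin r → Fin k → Bool // IsBaxter r k M}

/-- The number of Baxter matrices with `r` rows and `k` columns having exactly
`t` entries equal to 1. -/
noncomputable def baxterCountOnes (r k t : ℕ) : ℕ :=
  Nat.card {M : Fin r → Fin k → Bool // IsBaxter r k M ∧ onesCount r k M = t}

theorem baxterCountOnes_three_rows_two_extra (k : ℕ) (hk : 3 ≤ k) :
    (baxterCountOnes 3 k (k + 2) : ℚ) =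
      6*(k : ℚ)^2 - 13*(k : ℚ) + 11 := by
  have h1 : baxterCountOnes 3 k (k + 2) = (BX.PFin k).card := by
    unfold baxterCountOnes
    exact BX.count_eq k (by omega)
  rw [h1]
  exact BX.card_PFin k hk
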